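/- arXiv:2604.16978 — 5 statements merged into one kernel-verified Lean document; each statement's English description precedes it below -/
import Mathlib

section
/- Let F be a number field with ring of integers O, fix an integer n ≥ 1 and positive integer weights w_1,…,w_n, and let A = (A_1,…,A_n) ∈ F^n be a point with not all A_i equal to zero. Then the set I(A) = {a ∈ F : a^{w_i}·A_i ∈ O for all i = 1,…,n} is the underlying set of a nonzero fractional ideal of F. -/
open NumberField
open scoped nonZeroDivisors

/-! Since `O` is integrally closed, `{a : a ^ w * c ∈ O}` is closed under addition: every term
`a ^ k * b ^ (w - k) * c` of the binomial expansion of `(a + b) ^ w * c` has `w`-th power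
`(a ^ w * c) ^ k * (b ^ w * c) ^ (w - k) ∈ O`. So `I(A)` is the intersection of the submodules
`{a : a ^ wᵢ * Aᵢ ∈ O}`. The one with `Aᵢ = p / q ≠ 0` is fractional, `p * a` being integral
over `O`, and a common denominator `d` of all the `Aᵢ` lies in every one of them. -/

section

variable {R K : Type*} [CommRing R] [Field K] [Algebra R K] [IsFractionRing R K]
  [IsIntegrallyClosed R]

theorem mem_range_of_pow_mem_range {x : K} {m : ℕ} (hm : 0 < m)
    (hx : x ^ m ∈ (algebraMap R K).range) : x ∈ (algebraMap R K).range := by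
  obtain ⟨y, hy⟩ := hx
  exact IsIntegrallyClosed.exists_algebraMap_eq_of_isIntegral_pow hm (hy ▸ isIntegral_algebraMap)

theorem pow_mul_pow_mul_mem_range {w k : ℕ} (hw : 0 < w) (hk : k ≤ w) {a b c : K}
    (ha : a ^ w * c ∈ (algebraMap R K).range) (hb : b ^ w * c ∈ (algebraMap R K).range) :
    a ^ k * b ^ (w - k) * c ∈ (algebraMap R K).range := by
  obtain ⟨m, rfl⟩ := Nat.exists_eq_add_of_le hk
  rw [Nat.add_sub_cancel_left]
  refine mem_range_of_pow_mem_range hw ?_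
  have hpow : (a ^ k * b ^ m * c) ^ (k + m) = (a ^ (k + m) * c) ^ k * (b ^ (k + m) * c) ^ m := by
    ring
  rw [hpow]
  exact mul_mem (pow_mem ha k) (pow_mem hb m)

variable (R) in
def scalingSubmodule (w : ℕ) (hw : 0 < w) (c : K) : Submodule R K where
  carrier := {a | a ^ w * c ∈ (algebraMap R K).range}
  zero_mem' := by simp [zero_pow hw.ne']
  add_mem' {a b} ha hb := by
    simp only [Set.mem_ofPred_eq, add_pow, Finset.sum_mul]
    refine sum_mem fun k hk => ?_
    rw [mul_right_comm]
    exact mul_mem (pow_mul_pow_mul_mem_range hw (Finset.mem_range_succ_iff.mp hk) ha hb)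
      (natCast_mem _ _)
  smul_mem' r a ha := by
    simp only [Set.mem_ofPred_eq, Algebra.smul_def, mul_pow, mul_assoc, ← map_pow] at ha ⊢
    exact mul_mem ⟨_, rfl⟩ ha

@[simp]
theorem mem_scalingSubmodule {w : ℕ} {hw : 0 < w} {c a : K} :
    a ∈ scalingSubmodule R w hw c ↔ a ^ w * c ∈ (algebraMap R K).range :=
  Iff.rfl

theorem algebraMap_mem_scalingSubmodule {w : ℕ} (hw : 0 < w) {c : K} {d : R}
    (hd : algebraMap R K d * c ∈ (algebraMap R K).range) :
    algebraMap R K d ∈ scalingSubmodule R w hw c := by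
  obtain ⟨m, rfl⟩ := Nat.exists_eq_add_of_lt hw
  rw [mem_scalingSubmodule, zero_add, pow_succ, mul_assoc, ← map_pow]
  exact mul_mem ⟨_, rfl⟩ hd

theorem isFractional_scalingSubmodule [IsDomain R] {w : ℕ} (hw : 0 < w) {c : K} (hc : c ≠ 0) :
    IsFractional R⁰ (scalingSubmodule R w hw c) := by
  obtain ⟨q, p, hp⟩ := IsLocalization.exists_integer_multiple R⁰ c
  rw [Algebra.smul_def] at hp
  have hp0 : p ≠ 0 := by
    rintro rfl
    exact mul_ne_zero (IsFractionRing.to_map_ne_zero_of_mem_nonZeroDivisors q.2) hc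
      (by simpa using hp.symm)
  refine ⟨p, mem_nonZeroDivisors_of_ne_zero hp0, fun a ha => ?_⟩
  obtain ⟨m, rfl⟩ := Nat.exists_eq_add_one_of_ne_zero hw.ne'
  have hpow : (algebraMap R K p * a) ^ (m + 1) =
      algebraMap R K (p ^ m * q) * (a ^ (m + 1) * c) := by
    rw [map_mul, map_pow, hp]
    ring
  have hpa : (algebraMap R K p * a) ^ (m + 1) ∈ (algebraMap R K).range :=
    hpow ▸ mul_mem ⟨_, rfl⟩ ha
  obtain ⟨b, hb⟩ := mem_range_of_pow_mem_range hw hpa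
  exact ⟨b, by rw [hb, Algebra.smul_def]⟩

variable [IsDomain R] {ι : Type*} (w : ι → ℕ) (hw : ∀ i, 0 < w i) (c : ι → K)

theorem iInf_scalingSubmodule_ne_bot [Finite ι] :
    ⨅ i, scalingSubmodule R (w i) (hw i) (c i) ≠ ⊥ := by
  obtain ⟨d, hd⟩ := IsLocalization.exist_integer_multiples_of_finite R⁰ c
  refine (Submodule.ne_bot_iff _).mpr
    ⟨algebraMap R K d, Submodule.mem_iInf _ |>.mpr fun i => ?_,
      IsFractionRing.to_map_ne_zero_of_mem_nonZeroDivisors d.2⟩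
  obtain ⟨e, he⟩ := hd i
  exact algebraMap_mem_scalingSubmodule (hw i) ⟨e, by rw [he, Algebra.smul_def]⟩

theorem isFractional_iInf_scalingSubmodule {i₀ : ι} (hc : c i₀ ≠ 0) :
    IsFractional R⁰ (⨅ i, scalingSubmodule R (w i) (hw i) (c i)) :=
  FractionalIdeal.isFractional_of_le (J := ⟨_, isFractional_scalingSubmodule (hw i₀) hc⟩)
    (iInf_le _ i₀)

end

theorem weighted_projective_scaling_set_is_fractionalIdeal_general
    (F : Type*) [Field F] [NumberField F]
    (n : ℕ) (w : Fin n → ℕ+) (A : Fin n → F) (hA : ∃ i, A i ≠ 0) :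
    ∃ J : FractionalIdeal (𝓞 F)⁰ F, J ≠ 0 ∧
      ((J : Submodule (𝓞 F) F) : Set F) =
        {a : F | ∀ i : Fin n, a ^ (w i : ℕ) * A i ∈ (algebraMap (𝓞 F) F).range} := by
  obtain ⟨i₀, hi₀⟩ := hA
  have hw : ∀ i, 0 < (w i : ℕ) := fun i => (w i).pos
  refine ⟨⟨_, isFractional_iInf_scalingSubmodule (fun i => (w i : ℕ)) hw A hi₀⟩,
    FractionalIdeal.coeToSubmodule_ne_bot.mp (iInf_scalingSubmodule_ne_bot _ hw A), ?_⟩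
  ext a
  simp

/-- Let `F` be a number field with ring of integers `O`, fix `n ≥ 1` and
positive integer weights `w₁, …, wₙ`, and let `A ∈ Fⁿ` be a point with not all coordinates zero.
Then the set `{a ∈ F : a ^ wᵢ * Aᵢ ∈ O for all i}` is the underlying set of a nonzero
fractional ideal of `F`. -/
theorem weighted_projective_scaling_set_is_fractionalIdeal
    (F : Type*) [Field F] [NumberField F]
    (n : ℕ) (hn : 1 ≤ n) (w : Fin n → ℕ+) (A : Fin n → F) (hA : ∃ i, A i ≠ 0) :
    ∃ J : FractionalIdeal (𝓞 F)⁰ F, J ≠ 0 ∧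
      ((J : Submodule (𝓞 F) F) : Set F) =
        {a : F | ∀ i : Fin n, a ^ (w i : ℕ) * A i ∈ (algebraMap (𝓞 F) F).range} :=
  weighted_projective_scaling_set_is_fractionalIdeal_general F n w A hA
end

section
/- Let F be a number field with ring of integers O, fix an integer n ≥ 1 and positive integer weights w_1,…,w_n, and let A = (A_1,…,A_n) ∈ F^n be a point with not all A_i equal to zero. For α ∈ F^×, write α·A = (α^{w_1}A_1,…,α^{w_n}A_n). Let J and J' be the fractional ideals of F whose underlying sets are I(A) and I(α·A) respectively. Then the weighted projective height is invariant under this scaling action, i.e. N(J')·∏_{w infinite place of F} max_{1≤i≤n} (w(α^{w_i}A_i)^{mult(w)})^{1/w_i} = N(J)·∏_{w infinite place of F} max_{1≤i≤n} (w(A_i)^{mult(w)})^{1/w_i}, where N denotes the absolute norm of fractional ideals. -/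
open NumberField
open scoped nonZeroDivisors

/-- The weighted projective height on `Fⁿ` (for a number field `F`) is
invariant under the scaling action `α · (A₁, …, Aₙ) = (α^{w₁} A₁, …, α^{wₙ} Aₙ)`. -/
theorem weighted_projective_height_invariant
    (F : Type*) [Field F] [NumberField F]
    (n : ℕ) (hn : 1 ≤ n) (w : Fin n → ℕ+) (A : Fin n → F) (hA : ∃ i, A i ≠ 0)
    (α : F) (hα : α ≠ 0)
    (J J' : FractionalIdeal (𝓞 F)⁰ F)
    (hJ : ((J : Submodule (𝓞 F) F) : Set F) =
      {a : F | ∀ i : Fin n, a ^ (w i : ℕ) * A i ∈ (algebraMap (𝓞 F) F).range})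
    (hJ' : ((J' : Submodule (𝓞 F) F) : Set F) =
      {a : F | ∀ i : Fin n, a ^ (w i : ℕ) * (α ^ (w i : ℕ) * A i) ∈
        (algebraMap (𝓞 F) F).range}) :
    (FractionalIdeal.absNorm J' : ℝ) *
      ∏ v : InfinitePlace F,
        Finset.univ.sup' ⟨⟨0, hn⟩, Finset.mem_univ _⟩
          (fun i : Fin n => (v (α ^ (w i : ℕ) * A i) ^ v.mult) ^ (1 / (w i : ℝ))) =
    (FractionalIdeal.absNorm J : ℝ) *
      ∏ v : InfinitePlace F,
        Finset.univ.sup' ⟨⟨0, hn⟩, Finset.mem_univ _⟩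
          (fun i : Fin n => (v (A i) ^ v.mult) ^ (1 / (w i : ℝ))) := by
  have hmemJ : ∀ x : F, x ∈ J ↔
      ∀ i : Fin n, x ^ (w i : ℕ) * A i ∈ (algebraMap (𝓞 F) F).range := by
    intro x
    rw [← FractionalIdeal.mem_coe, ← SetLike.mem_coe, hJ]
    rfl
  have hmemJ' : ∀ x : F, x ∈ J' ↔
      ∀ i : Fin n, x ^ (w i : ℕ) * (α ^ (w i : ℕ) * A i) ∈ (algebraMap (𝓞 F) F).range := by
    intro x
    rw [← FractionalIdeal.mem_coe, ← SetLike.mem_coe, hJ']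
    rfl
  -- Step 1: J = spanSingleton α * J'
  have hJJ' : J = FractionalIdeal.spanSingleton (𝓞 F)⁰ α * J' := by
    apply FractionalIdeal.coeToSubmodule_injective
    apply Submodule.ext
    intro x
    simp only [FractionalIdeal.mem_coe]
    constructor
    · intro hx
      have hx' := (hmemJ x).mp hx
      refine FractionalIdeal.mem_singleton_mul.mpr ⟨α⁻¹ * x, (hmemJ' _).mpr fun i => ?_,
        by rw [← mul_assoc, mul_inv_cancel₀ hα, one_mul]⟩
      have : (α⁻¹ * x) ^ (w i : ℕ) * (α ^ (w i : ℕ) * A i) = x ^ (w i : ℕ) * A i := by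
        rw [mul_pow, inv_pow]
        field_simp
      rw [this]
      exact hx' i
    · intro hx
      obtain ⟨y, hy, rfl⟩ := FractionalIdeal.mem_singleton_mul.mp hx
      have hy' := (hmemJ' y).mp hy
      refine (hmemJ _).mpr fun i => ?_
      have : (α * y) ^ (w i : ℕ) * A i = y ^ (w i : ℕ) * (α ^ (w i : ℕ) * A i) := by
        rw [mul_pow]; ring
      rw [this]
      exact hy' i
  -- Step 2: norms
  have hnorm : (FractionalIdeal.absNorm J : ℚ) =
      |Algebra.norm ℚ α| * FractionalIdeal.absNorm J' := by
    rw [hJJ', map_mul, FractionalIdeal.absNorm_span_singleton]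
  have hNα : (0:ℝ) < |(Algebra.norm ℚ α : ℝ)| := by
    rw [abs_pos]
    exact_mod_cast Algebra.norm_ne_zero_iff.mpr hα
  -- Step 3: pointwise identity at each infinite place
  have key : ∀ (v : InfinitePlace F) (i : Fin n),
      (v (α ^ (w i : ℕ) * A i) ^ v.mult) ^ (1 / (w i : ℝ)) =
        (v α ^ v.mult) * (v (A i) ^ v.mult) ^ (1 / (w i : ℝ)) := by
    intro v i
    have hw : ((w i : ℕ) : ℝ) ≠ 0 := by positivity
    rw [map_mul, map_pow, mul_pow, ← pow_mul,
      Real.mul_rpow (by positivity) (by positivity),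
      ← Real.rpow_natCast (v α) ((w i : ℕ) * v.mult),
      ← Real.rpow_mul (apply_nonneg v α)]
    congr 1
    rw [Nat.cast_mul, mul_one_div, mul_comm (((w i : ℕ) : ℝ)), mul_div_assoc,
      div_self hw, mul_one, Real.rpow_natCast]
  -- Step 4: pull the constant out of the sup'
  have hsup : ∀ v : InfinitePlace F,
      Finset.univ.sup' ⟨⟨0, hn⟩, Finset.mem_univ _⟩
        (fun i : Fin n => (v (α ^ (w i : ℕ) * A i) ^ v.mult) ^ (1 / (w i : ℝ))) =
      (v α ^ v.mult) * Finset.univ.sup' ⟨⟨0, hn⟩, Finset.mem_univ _⟩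
        (fun i : Fin n => (v (A i) ^ v.mult) ^ (1 / (w i : ℝ))) := by
    intro v
    rw [Finset.comp_sup'_eq_sup'_comp (γ := ℝ) ⟨⟨0, hn⟩, Finset.mem_univ _⟩
      (fun x => (v α ^ v.mult) * x)
      (fun x y => mul_max_of_nonneg x y (by positivity))]
    exact Finset.sup'_congr _ rfl (fun i _ => key v i)
  simp only [hsup]
  rw [Finset.prod_mul_distrib, InfinitePlace.prod_eq_abs_norm]
  have hc : (FractionalIdeal.absNorm J : ℝ) =
      |(Algebra.norm ℚ α : ℝ)| * (FractionalIdeal.absNorm J' : ℝ) := by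
    rw [show |(Algebra.norm ℚ α : ℝ)| = ((|Algebra.norm ℚ α| : ℚ) : ℝ) by push_cast; ring]
    exact_mod_cast congrArg (fun q : ℚ => (q : ℝ)) hnorm
  rw [hc]
  push_cast
  ring
end

section
/- Let F be a number field of degree d over ℚ with ring of integers O, let n ≥ 1, and let B be a compact subset of F_∞^n. Then there exists a constant C > 0, depending only on F, n and B, such that for every real number r, every nonzero ideal I of O, and every subset Y ⊆ (O/I)^n, the number of points a ∈ O^n such that σ(a) ∈ r·B and the componentwise reduction of a modulo I lies in Y is at most C·(|r|^{nd}/N(I)^n + 1)·#Y, where |r| denotes the usual absolute value of r. -/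
open NumberField Module
open scoped Pointwise

/-!
Two points of `Oⁿ` with the same residue modulo `I` differ by a nonzero vector of `Iⁿ`, and a
nonzero `x ∈ I` satisfies `N(I) ≤ |N(x)| ≤ ‖σ x‖ ^ d`. Hence, if `B` lies in the ball of
radius `R`, each residue class in `Y` contributes an `N(I)^{1/d}`-separated set of points in the
ball of radius `|r| R`. Comparing the volume of the disjoint balls of radius `N(I)^{1/d} / 2`
around these points with that of a slightly larger ball bounds their number by
`(2 |r| R / N(I)^{1/d} + 1) ^ (n d) ≤ (3 R) ^ (n d) (|r| ^ (n d) / N(I) ^ n + 1)`.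
-/

open Metric MeasureTheory in
theorem Finset.card_le_of_norm_le_of_pairwise_le_norm_sub {E : Type*} [NormedAddCommGroup E]
    [NormedSpace ℝ E] [FiniteDimensional ℝ E] (s : Finset E) {M δ : ℝ} (hM : 0 ≤ M) (hδ : 0 < δ)
    (hs : ∀ x ∈ s, ‖x‖ ≤ M) (hsep : (s : Set E).Pairwise fun x y ↦ δ ≤ ‖x - y‖) :
    (s.card : ℝ) ≤ (2 * M / δ + 1) ^ finrank ℝ E := by
  borelize E
  let μ : Measure E := Measure.addHaar
  have hρ : 0 < δ / 2 := half_pos hδ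
  have hR : 0 < M + δ / 2 := by positivity
  have hdisj : (s : Set E).PairwiseDisjoint fun x ↦ ball x (δ / 2) := fun x hx y hy hxy ↦
    ball_disjoint_ball (by rw [dist_eq_norm]; linarith [hsep hx hy hxy])
  have hsub : ⋃ x ∈ s, ball x (δ / 2) ⊆ ball 0 (M + δ / 2) := Set.iUnion₂_subset fun x hx ↦
    ball_subset_ball' (by rw [dist_zero_right]; linarith [hs x hx])
  have hvol : (s.card : ENNReal) * ENNReal.ofReal ((δ / 2) ^ finrank ℝ E) * μ (ball 0 1) ≤
      ENNReal.ofReal ((M + δ / 2) ^ finrank ℝ E) * μ (ball 0 1) :=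
    calc _ = μ (⋃ x ∈ s, ball x (δ / 2)) := by
          rw [measure_biUnion_finset hdisj fun x _ ↦ measurableSet_ball]
          simp only [μ.addHaar_ball_of_pos _ hρ, Finset.sum_const, nsmul_eq_mul, mul_assoc]
      _ ≤ μ (ball 0 (M + δ / 2)) := measure_mono hsub
      _ = _ := μ.addHaar_ball_of_pos _ hR
  have hcard : (s.card : ℝ) * (δ / 2) ^ finrank ℝ E ≤ (M + δ / 2) ^ finrank ℝ E := by
    have := ENNReal.toReal_le_of_le_ofReal (by positivity) <|
      (ENNReal.mul_le_mul_iff_left (measure_ball_pos _ _ one_pos).ne'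
        measure_ball_lt_top.ne).1 hvol
    simpa [ENNReal.toReal_ofReal (by positivity : (0 : ℝ) ≤ (δ / 2) ^ finrank ℝ E)] using this
  calc (s.card : ℝ) ≤ (M + δ / 2) ^ finrank ℝ E / (δ / 2) ^ finrank ℝ E := by
        rwa [le_div_iff₀ (by positivity)]
    _ = _ := by rw [← div_pow]; congr 1; field_simp

theorem Set.finite_and_ncard_le_of_norm_le_of_pairwise_le_norm_sub {ι E : Type*}
    [NormedAddCommGroup E] [NormedSpace ℝ E] [FiniteDimensional ℝ E] {S : Set ι} (f : ι → E)
    {M δ : ℝ} (hM : 0 ≤ M) (hδ : 0 < δ) (hS : ∀ a ∈ S, ‖f a‖ ≤ M)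
    (hsep : S.Pairwise fun a b ↦ δ ≤ ‖f a - f b‖) :
    S.Finite ∧ (S.ncard : ℝ) ≤ (2 * M / δ + 1) ^ finrank ℝ E := by
  classical
  have hinj : S.InjOn f := fun a ha b hb hab ↦ by
    by_contra hne
    have : δ ≤ ‖f a - f b‖ := hsep ha hb hne
    rw [hab, sub_self, norm_zero] at this
    linarith
  have hfin : ∀ t : Finset ι, ↑t ⊆ S → (t.card : ℝ) ≤ (2 * M / δ + 1) ^ finrank ℝ E :=
    fun t ht ↦ by
      rw [← Finset.card_image_of_injOn (hinj.mono ht)]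
      refine Finset.card_le_of_norm_le_of_pairwise_le_norm_sub _ hM hδ ?_ ?_
      · simpa using fun a ha ↦ hS a (ht ha)
      · simp only [Finset.coe_image]
        rintro _ ⟨a, ha, rfl⟩ _ ⟨b, hb, rfl⟩ hne
        exact hsep (ht ha) (ht hb) (ne_of_apply_ne f hne)
  have hS : S.Finite := by
    by_contra hinf
    obtain ⟨t, ht, hcard⟩ := Set.Infinite.exists_subset_card_eq hinf
      (⌊(2 * M / δ + 1) ^ finrank ℝ E⌋₊ + 1)
    have := hfin t ht
    rw [hcard, Nat.cast_add_one] at this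
    linarith [Nat.lt_floor_add_one ((2 * M / δ + 1) ^ finrank ℝ E)]
  exact ⟨hS, by simpa [Set.ncard_eq_toFinset_card S hS] using hfin hS.toFinset (by simp)⟩

theorem two_mul_add_one_pow_le {u : ℝ} (hu : 0 ≤ u) (D : ℕ) :
    (2 * u + 1) ^ D ≤ 3 ^ D * (u ^ D + 1) := by
  rcases le_total u 1 with h | h
  · calc (2 * u + 1) ^ D ≤ 3 ^ D := pow_le_pow_left₀ (by positivity) (by linarith) D
      _ ≤ 3 ^ D * (u ^ D + 1) := le_mul_of_one_le_right (by positivity) (by simp [pow_nonneg hu])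
  · calc (2 * u + 1) ^ D ≤ (3 * u) ^ D := pow_le_pow_left₀ (by positivity) (by linarith) D
      _ ≤ 3 ^ D * (u ^ D + 1) := by rw [mul_pow]; gcongr; linarith

theorem two_mul_mul_div_add_one_pow_le {x R δ : ℝ} (hx : 0 ≤ x) (hR : 1 ≤ R) (hδ : 0 < δ)
    (D : ℕ) : (2 * (x * R) / δ + 1) ^ D ≤ (3 * R) ^ D * (x ^ D / δ ^ D + 1) :=
  calc (2 * (x * R) / δ + 1) ^ D ≤ 3 ^ D * ((x * R / δ) ^ D + 1) := by
        rw [mul_div_assoc]; exact two_mul_add_one_pow_le (by positivity) D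
    _ = 3 ^ D * (R ^ D * (x ^ D / δ ^ D) + 1) := by rw [div_pow, mul_pow]; ring
    _ ≤ 3 ^ D * (R ^ D * (x ^ D / δ ^ D) + R ^ D) := by gcongr; exact one_le_pow₀ hR
    _ = (3 * R) ^ D * (x ^ D / δ ^ D + 1) := by ring

theorem Set.finite_and_ncard_le_mul_ncard_of_fibers {α β : Type*} {S : Set α} {Y : Set β}
    {g : α → β} (hY : Y.Finite) (hg : Set.MapsTo g S Y) {K : ℝ}
    (hfib : ∀ y ∈ Y, (S ∩ g ⁻¹' {y}).Finite ∧ ((S ∩ g ⁻¹' {y}).ncard : ℝ) ≤ K) :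
    S.Finite ∧ (S.ncard : ℝ) ≤ K * Y.ncard := by
  have hS : S = ⋃ y ∈ hY.toFinset, S ∩ g ⁻¹' {y} := by
    ext a
    simpa using fun ha ↦ hg ha
  refine ⟨hS ▸ hY.toFinset.finite_toSet.biUnion fun y hy ↦ (hfib y (by simpa using hy)).1, ?_⟩
  calc (S.ncard : ℝ) ≤ ∑ y ∈ hY.toFinset, ((S ∩ g ⁻¹' {y}).ncard : ℝ) := by
        conv_lhs => rw [hS]
        exact_mod_cast hY.toFinset.set_ncard_biUnion_le _
    _ ≤ ∑ _y ∈ hY.toFinset, K := Finset.sum_le_sum fun y hy ↦ (hfib y (by simpa using hy)).2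
    _ = K * Y.ncard := by
        rw [Finset.sum_const, nsmul_eq_mul, Set.ncard_eq_toFinset_card Y hY, mul_comm]

namespace NumberField

variable {K : Type*} [Field K] [NumberField K]

-- The norm on `mixedSpace K` needs the places of `K` to be decidably real or complex.
open scoped Classical

theorem mixedEmbedding.norm_le_norm_pow_finrank (x : mixedEmbedding.mixedSpace K) :
    mixedEmbedding.norm x ≤ ‖x‖ ^ finrank ℚ K := by
  have hle (w : InfinitePlace K) : mixedEmbedding.normAtPlace w x ≤ ‖x‖ := by
    rw [mixedEmbedding.norm_eq_sup'_normAtPlace]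
    exact Finset.le_sup' (fun w ↦ mixedEmbedding.normAtPlace w x) (Finset.mem_univ w)
  calc mixedEmbedding.norm x ≤ ∏ w : InfinitePlace K, ‖x‖ ^ w.mult :=
        Finset.prod_le_prod (fun w _ ↦ pow_nonneg (mixedEmbedding.normAtPlace_nonneg w x) _)
          fun w _ ↦ pow_le_pow_left₀ (mixedEmbedding.normAtPlace_nonneg w x) (hle w) _
    _ = ‖x‖ ^ finrank ℚ K := by rw [Finset.prod_pow_eq_pow_sum, InfinitePlace.sum_mult_eq]

theorem absNorm_le_norm_mixedEmbedding_pow_of_mem {I : Ideal (𝓞 K)} {x : 𝓞 K} (hx : x ∈ I)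
    (hx0 : x ≠ 0) :
    (Ideal.absNorm I : ℝ) ≤ ‖mixedEmbedding K (x : K)‖ ^ finrank ℚ K := by
  have hdvd : Ideal.absNorm I ∣ Ideal.absNorm (Ideal.span {x}) :=
    Ideal.absNorm_dvd_absNorm_of_le (Ideal.span_singleton_le_iff_mem _ |>.mpr hx)
  have hpos : 0 < Ideal.absNorm (Ideal.span {x}) := Nat.pos_of_ne_zero <|
    Ideal.absNorm_eq_zero_iff.not.mpr (Ideal.span_singleton_eq_bot.not.mpr hx0)
  calc (Ideal.absNorm I : ℝ) ≤ Ideal.absNorm (Ideal.span {x}) := by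
        exact_mod_cast Nat.le_of_dvd hpos hdvd
    _ = mixedEmbedding.norm (mixedEmbedding K (x : K)) := by
        rw [Ideal.absNorm_span_singleton, mixedEmbedding.norm_eq_norm, ← Algebra.coe_norm_int]
        push_cast
        rw [Nat.cast_natAbs, Int.cast_abs]
    _ ≤ _ := mixedEmbedding.norm_le_norm_pow_finrank _

theorem absNorm_rpow_inv_finrank_le_norm_sub {ι : Type*} [Fintype ι] {I : Ideal (𝓞 K)}
    {a b : ι → 𝓞 K} (hab : a ≠ b)
    (hmod : ∀ i, Ideal.Quotient.mk I (a i) = Ideal.Quotient.mk I (b i)) :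
    (Ideal.absNorm I : ℝ) ^ (finrank ℚ K : ℝ)⁻¹ ≤
      ‖(fun i ↦ mixedEmbedding K (a i : K)) - fun i ↦ mixedEmbedding K (b i : K)‖ := by
  obtain ⟨i, hi⟩ := Function.ne_iff.mp hab
  have hmem : a i - b i ∈ I := Ideal.Quotient.eq.mp (hmod i)
  have hd : (0 : ℝ) < finrank ℚ K := by exact_mod_cast finrank_pos
  calc (Ideal.absNorm I : ℝ) ^ (finrank ℚ K : ℝ)⁻¹
      ≤ ‖mixedEmbedding K ((a i - b i : 𝓞 K) : K)‖ := by
        rw [Real.rpow_inv_le_iff_of_pos (by positivity) (norm_nonneg _) hd, Real.rpow_natCast]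
        exact absNorm_le_norm_mixedEmbedding_pow_of_mem hmem (sub_ne_zero.mpr hi)
    _ = ‖((fun i ↦ mixedEmbedding K (a i : K)) - fun i ↦ mixedEmbedding K (b i : K)) i‖ := by
        simp
    _ ≤ _ := norm_le_pi_norm _ i

end NumberField

theorem count_lattice_points_with_congruence_general
    (F : Type*) [Field F] [NumberField F]
    (n : ℕ)
    (B : Set (Fin n → mixedEmbedding.mixedSpace F)) (hB : IsCompact B) :
    ∃ C : ℝ, 0 < C ∧
      ∀ (r : ℝ) (I : Ideal (𝓞 F)) (_ : I ≠ ⊥) (Y : Set (Fin n → (𝓞 F) ⧸ I)),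
        letI S : Set (Fin n → 𝓞 F) :=
          {a | (fun i => mixedEmbedding F (algebraMap (𝓞 F) F (a i))) ∈ r • B ∧
               (fun i => Ideal.Quotient.mk I (a i)) ∈ Y}
        S.Finite ∧
        (S.ncard : ℝ) ≤
          C * (|r| ^ (n * Module.finrank ℚ F) / (Ideal.absNorm I : ℝ) ^ n + 1) *
            (Y.ncard : ℝ) := by
  classical
  obtain ⟨R, hR, hRB⟩ : ∃ R : ℝ, 1 ≤ R ∧ ∀ b ∈ B, ‖b‖ ≤ R := by
    obtain ⟨R, hR⟩ := isBounded_iff_forall_norm_le.mp hB.isBounded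
    exact ⟨max R 1, le_max_right _ _, fun b hb ↦ (hR b hb).trans (le_max_left _ _)⟩
  set d := finrank ℚ F
  refine ⟨(3 * R) ^ (n * d), by positivity, fun r I hI Y ↦ ?_⟩
  have : Finite (𝓞 F ⧸ I) := Ideal.finiteQuotientOfFreeOfNeBot I hI
  have hN : 0 < (Ideal.absNorm I : ℝ) := by
    exact_mod_cast Nat.pos_of_ne_zero (Ideal.absNorm_eq_zero_iff.not.mpr hI)
  set δ := (Ideal.absNorm I : ℝ) ^ (d : ℝ)⁻¹
  have hδ : δ ^ (n * d) = (Ideal.absNorm I : ℝ) ^ n := by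
    rw [mul_comm, pow_mul, Real.rpow_inv_natCast_pow hN.le finrank_pos.ne']
  refine Set.finite_and_ncard_le_mul_ncard_of_fibers (Set.toFinite Y) (fun a ha ↦ ha.2)
    fun y _ ↦ ?_
  refine (Set.finite_and_ncard_le_of_norm_le_of_pairwise_le_norm_sub
    (fun (a : Fin n → 𝓞 F) i ↦ mixedEmbedding F (algebraMap (𝓞 F) F (a i)))
    (by positivity : 0 ≤ |r| * R) (by positivity : 0 < δ) ?_ ?_).imp_right (le_trans · ?_)
  · rintro a ⟨⟨⟨b, hb, hab⟩, -⟩, -⟩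
    rw [← hab, norm_smul, Real.norm_eq_abs]
    exact mul_le_mul_of_nonneg_left (hRB b hb) (abs_nonneg r)
  · rintro a ⟨-, ha⟩ b ⟨-, hb⟩ hab
    exact NumberField.absNorm_rpow_inv_finrank_le_norm_sub hab fun i ↦
      congrFun ((Set.mem_preimage.mp ha).trans (Set.mem_preimage.mp hb).symm) i
  · rw [finrank_pi_fintype, Finset.sum_const, Finset.card_univ, Fintype.card_fin, smul_eq_mul,
      mixedEmbedding.finrank, ← hδ]
    exact two_mul_mul_div_add_one_pow_le (abs_nonneg r) hR (by positivity) _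

/-- (Counting lattice points with congruence conditions.)
Let `F` be a number field of degree `d` with ring of integers `O`, `n ≥ 1`, and `B` a compact
subset of `F_∞ⁿ` (here `F_∞` is realized as the mixed space of `F` and `σ` is the canonical
(mixed) embedding). Then there is a constant `C > 0`, depending only on `F`, `n` and `B`, such
that for every `r ∈ ℝ`, every nonzero ideal `I` of `O` and every `Y ⊆ (O/I)ⁿ`, the number of
`a ∈ Oⁿ` with `σ(a) ∈ r·B` and `a mod I ∈ Y` is at most `C·(|r|^{nd}/N(I)ⁿ + 1)·#Y`. -/
theorem count_lattice_points_with_congruence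
    (F : Type*) [Field F] [NumberField F]
    (n : ℕ) (hn : 1 ≤ n)
    (B : Set (Fin n → mixedEmbedding.mixedSpace F)) (hB : IsCompact B) :
    ∃ C : ℝ, 0 < C ∧
      ∀ (r : ℝ) (I : Ideal (𝓞 F)) (_ : I ≠ ⊥) (Y : Set (Fin n → (𝓞 F) ⧸ I)),
        letI S : Set (Fin n → 𝓞 F) :=
          {a | (fun i => mixedEmbedding F (algebraMap (𝓞 F) F (a i))) ∈ r • B ∧
               (fun i => Ideal.Quotient.mk I (a i)) ∈ Y}
        S.Finite ∧
        (S.ncard : ℝ) ≤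
          C * (|r| ^ (n * Module.finrank ℚ F) / (Ideal.absNorm I : ℝ) ^ n + 1) *
            (Y.ncard : ℝ) :=
  count_lattice_points_with_congruence_general F n B hB
end

section
/- Fix an integer n ≥ 1 and a field F of characteristic ≠ 2, and set N = 2n+2. Let A be the N×N antidiagonal matrix over F with A_{i,j} = 1 if i + j = N + 1 and A_{i,j} = 0 otherwise, and let B be a symmetric N×N matrix over F. Suppose there are integers a, b with 1 ≤ a, b ≤ N and a + b ≥ N such that B_{i,j} = 0 whenever i ≤ a and j ≤ b. Then the polynomial f(x) = det(x·A − B) ∈ F[x] is not separable (equivalently, its discriminant vanishes). -/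
open Polynomial
open Matrix

lemma det_submatrix_eq_sign_mul {R : Type*} [CommRing R] {m n : Type*}
    [DecidableEq m] [Fintype m] [DecidableEq n] [Fintype n]
    (e f : m ≃ n) (M : Matrix n n R) :
    ∃ ε : R, (ε = 1 ∨ ε = -1) ∧ M.det = ε * (M.submatrix e f).det := by
  have h1 : M.submatrix e f = (M.submatrix e e).submatrix id (f.trans e.symm) := by
    ext i j
    simp [Matrix.submatrix_apply]
  have h2 := Matrix.det_permute' (f.trans e.symm) (M.submatrix e e)
  rw [← h1, Matrix.det_submatrix_equiv_self] at h2
  rcases Int.units_eq_one_or (Equiv.Perm.sign (f.trans e.symm)) with h | h <;>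
    rw [h] at h2
  · exact ⟨1, Or.inl rfl, by simpa using h2.symm⟩
  · refine ⟨-1, Or.inr rfl, ?_⟩
    have : (M.submatrix e f).det = - M.det := by simpa using h2
    rw [this]; ring

lemma block_det_dvd {R : Type*} [CommRing R] {N a b : ℕ} (hab : a + b = N) (hba : b ≤ a)
    (M : Matrix (Fin N) (Fin N) R) (hsym : ∀ i j, M i j = M j i)
    (h0 : ∀ i j : Fin N, (i : ℕ) < a → (j : ℕ) < b → M i j = 0)
    (f g : Fin b → Fin N) (hf : ∀ i, (f i : ℕ) = (i : ℕ)) (hg : ∀ j, (g j : ℕ) = a + j) :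
    (M.submatrix f g).det * (M.submatrix f g).det ∣ M.det := by
  have hM : ∀ (u v u' v' : Fin N), (u : ℕ) = (u' : ℕ) → (v : ℕ) = (v' : ℕ) → M u v = M u' v' := by
    intro u v u' v' h1 h2
    congr 1 <;> exact Fin.ext ‹_›
  let r1 : Fin a ⊕ Fin b ≃ Fin N :=
    (Equiv.sumComm (Fin a) (Fin b)).trans (finSumFinEquiv.trans (finCongr (by omega)))
  let c1 : Fin a ⊕ Fin b ≃ Fin N := finSumFinEquiv.trans (finCongr hab)
  have hr1l : ∀ i : Fin a, (r1 (Sum.inl i) : ℕ) = b + i := fun i => by simp [r1]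
  have hr1r : ∀ i : Fin b, (r1 (Sum.inr i) : ℕ) = i := fun i => by simp [r1]
  have hc1l : ∀ i : Fin a, (c1 (Sum.inl i) : ℕ) = i := fun i => by simp [c1]
  have hc1r : ∀ i : Fin b, (c1 (Sum.inr i) : ℕ) = a + i := fun i => by simp [c1]
  obtain ⟨ε1, hε1, hdet1⟩ := det_submatrix_eq_sign_mul r1 c1 M
  set M1 := M.submatrix r1 c1 with hM1def
  have h21 : M1.toBlocks₂₁ = 0 := by
    ext i j
    simp only [Matrix.toBlocks₂₁, Matrix.of_apply, Matrix.zero_apply, hM1def,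
      Matrix.submatrix_apply]
    rw [hsym]
    exact h0 _ _ (by rw [hc1l]; omega) (by rw [hr1r]; omega)
  have hdetM1 : M1.det = M1.toBlocks₁₁.det * M1.toBlocks₂₂.det := by
    conv_lhs => rw [← Matrix.fromBlocks_toBlocks M1, h21]
    exact Matrix.det_fromBlocks_zero₂₁ _ _ _
  have hX : M1.toBlocks₂₂ = M.submatrix f g := by
    ext i j
    simp only [Matrix.toBlocks₂₂, Matrix.of_apply, hM1def, Matrix.submatrix_apply]
    exact hM _ _ _ _ (by rw [hr1r, hf]) (by rw [hc1r, hg])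
  -- second level
  set Cm := M1.toBlocks₁₁ with hCdef
  let r2 : Fin b ⊕ Fin (a - b) ≃ Fin a :=
    (Equiv.sumComm (Fin b) (Fin (a - b))).trans (finSumFinEquiv.trans (finCongr (by omega)))
  let c2 : Fin b ⊕ Fin (a - b) ≃ Fin a := finSumFinEquiv.trans (finCongr (by omega))
  have hr2l : ∀ i : Fin b, (r2 (Sum.inl i) : ℕ) = (a - b) + i := fun i => by simp [r2]
  have hr2r : ∀ i : Fin (a - b), (r2 (Sum.inr i) : ℕ) = i := fun i => by simp [r2]
  have hc2l : ∀ i : Fin b, (c2 (Sum.inl i) : ℕ) = i := fun i => by simp [c2]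
  have hc2r : ∀ i : Fin (a - b), (c2 (Sum.inr i) : ℕ) = b + i := fun i => by simp [c2]
  obtain ⟨ε2, hε2, hdet2⟩ := det_submatrix_eq_sign_mul r2 c2 Cm
  set C1 := Cm.submatrix r2 c2 with hC1def
  have hCentry : ∀ (u v : Fin a), Cm u v = M (r1 (Sum.inl u)) (c1 (Sum.inl v)) := by
    intro u v
    simp [hCdef, Matrix.toBlocks₁₁, hM1def]
  have h21' : C1.toBlocks₂₁ = 0 := by
    ext i j
    simp only [Matrix.toBlocks₂₁, Matrix.of_apply, Matrix.zero_apply, hC1def,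
      Matrix.submatrix_apply]
    rw [hCentry]
    refine h0 _ _ ?_ ?_
    · rw [hr1l, hr2r]; omega
    · rw [hc1l, hc2l]; omega
  have hdetC1 : C1.det = C1.toBlocks₁₁.det * C1.toBlocks₂₂.det := by
    conv_lhs => rw [← Matrix.fromBlocks_toBlocks C1, h21']
    exact Matrix.det_fromBlocks_zero₂₁ _ _ _
  have hW : C1.toBlocks₁₁ = (M.submatrix f g)ᵀ := by
    ext i j
    simp only [Matrix.toBlocks₁₁, Matrix.of_apply, hC1def, Matrix.submatrix_apply,
      Matrix.transpose_apply]
    rw [hCentry, hsym]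
    refine hM _ _ _ _ ?_ ?_
    · rw [hc1l, hc2l, hf]
    · rw [hr1l, hr2l, hg]; omega
  refine ⟨ε1 * ε2 * C1.toBlocks₂₂.det, ?_⟩
  rw [hdet1, hdetM1, hX, hdet2, hdetC1, hW,
    Matrix.det_transpose]
  ring


/-- (Case 1 of the non-genericity criterion.) Fix `n ≥ 1` and a field `F` of
characteristic `≠ 2`, and set `N = 2n+2`. Let `A` be the `N×N` antidiagonal matrix and `B` a
symmetric `N×N` matrix over `F`. If there are `1 ≤ a, b ≤ N` with `a + b ≥ N` such that
`B i j = 0` whenever `i ≤ a` and `j ≤ b` (in `1`-based indexing), then `det(x·A − B)` is not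
separable. -/
theorem pencil_with_large_zero_block_not_separable
    (n : ℕ) (hn : 1 ≤ n) (F : Type*) [Field F] (hF : (2 : F) ≠ 0)
    (A B : Matrix (Fin (2 * n + 2)) (Fin (2 * n + 2)) F)
    (hA : ∀ i j : Fin (2 * n + 2), A i j = if (i : ℕ) + (j : ℕ) = 2 * n + 1 then 1 else 0)
    (hB : B.IsSymm)
    (a b : ℕ) (ha1 : 1 ≤ a) (ha2 : a ≤ 2 * n + 2) (hb1 : 1 ≤ b) (hb2 : b ≤ 2 * n + 2)
    (hab : 2 * n + 2 ≤ a + b)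
    (hzero : ∀ i j : Fin (2 * n + 2), (i : ℕ) < a → (j : ℕ) < b → B i j = 0) :
    ¬ ((Polynomial.X : Polynomial F) • A.map Polynomial.C - B.map Polynomial.C).det.Separable := by
  intro hsep
  set M : Matrix (Fin (2 * n + 2)) (Fin (2 * n + 2)) (Polynomial F) :=
    (Polynomial.X : Polynomial F) • A.map Polynomial.C - B.map Polynomial.C with hMdef
  have hBsymm : ∀ i j, B i j = B j i := fun i j => (hB.apply i j).symm
  obtain ⟨a', b', hab', hba', hb'1, hz⟩ :
      ∃ a' b' : ℕ, a' + b' = 2 * n + 2 ∧ b' ≤ a' ∧ 1 ≤ b' ∧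
        ∀ i j : Fin (2 * n + 2), (i : ℕ) < a' → (j : ℕ) < b' → B i j = 0 := by
    refine ⟨min (max a b) (2 * n + 1), 2 * n + 2 - min (max a b) (2 * n + 1),
      by omega, by omega, by omega, ?_⟩
    intro i j hi hj
    rcases le_total a b with h | h
    · rw [hBsymm]
      exact hzero j i (by omega) (by omega)
    · exact hzero i j (by omega) (by omega)
  have hsymM : ∀ i j : Fin (2 * n + 2), M i j = M j i := by
    intro i j
    simp only [hMdef, Matrix.sub_apply, Matrix.smul_apply, Matrix.map_apply, smul_eq_mul]
    rw [hA, hA, hBsymm i j, Nat.add_comm (i : ℕ) (j : ℕ)]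
  have h0M : ∀ i j : Fin (2 * n + 2), (i : ℕ) < a' → (j : ℕ) < b' → M i j = 0 := by
    intro i j hi hj
    simp only [hMdef, Matrix.sub_apply, Matrix.smul_apply, Matrix.map_apply, smul_eq_mul]
    rw [hA, hz i j hi hj, if_neg (by omega)]
    simp
  set f : Fin b' → Fin (2 * n + 2) := fun i => ⟨i, by have := i.2; omega⟩ with hfdef
  set g : Fin b' → Fin (2 * n + 2) := fun j => ⟨a' + j, by have := j.2; omega⟩ with hgdef
  have hdvd := block_det_dvd hab' hba' M hsymM h0M f g (fun i => rfl) (fun j => rfl)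
  have hunit : IsUnit (M.submatrix f g).det := hsep.squarefree _ hdvd
  set D := M.submatrix f g with hDdef
  set B2 : Matrix (Fin b') (Fin b') F :=
    Matrix.of (fun i j => B (f i) (g (Fin.rev j))) with hB2def
  have hE : D.submatrix (Equiv.refl (Fin b')) Fin.revPerm = charmatrix B2 := by
    refine Matrix.ext fun i j => ?_
    have hval : (Fin.rev j : ℕ) = b' - (j + 1) := Fin.val_rev j
    simp only [Matrix.submatrix_apply, Equiv.refl_apply, Fin.revPerm_apply, hDdef, hMdef,
      Matrix.sub_apply, Matrix.smul_apply, Matrix.map_apply, smul_eq_mul]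
    rcases eq_or_ne i j with rfl | hne
    · rw [charmatrix_apply_eq, hA]
      rw [if_pos (show ((f i : Fin (2*n+2)) : ℕ) + ((g (Fin.rev i) : Fin (2*n+2)) : ℕ) = 2*n+1
          from by show (i : ℕ) + (a' + (Fin.rev i : ℕ)) = 2*n+1; have := i.2; omega)]
      rw [_root_.map_one, mul_one]
      simp [hB2def]
    · rw [charmatrix_apply_ne _ _ _ hne, hA]
      have hne' : (i : ℕ) ≠ (j : ℕ) := fun h => hne (Fin.ext h)
      rw [if_neg (show ¬ (((f i : Fin (2*n+2)) : ℕ) + ((g (Fin.rev j) : Fin (2*n+2)) : ℕ) = 2*n+1)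
          from by show ¬ ((i : ℕ) + (a' + (Fin.rev j : ℕ)) = 2*n+1);
                  have := i.2; have := j.2; omega)]
      rw [_root_.map_zero, mul_zero, zero_sub]
      simp [hB2def]
  obtain ⟨ε, hε, hεeq⟩ := det_submatrix_eq_sign_mul (Equiv.refl (Fin b')) Fin.revPerm D
  rw [hE] at hεeq
  rw [hεeq] at hunit
  have hunitc : IsUnit (charmatrix B2).det := (IsUnit.mul_iff.mp hunit).2
  have hchar : (charmatrix B2).det = B2.charpoly := rfl
  rw [hchar] at hunitc
  have hdeg := Polynomial.natDegree_eq_zero_of_isUnit hunitc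
  rw [Matrix.charpoly_natDegree_eq_dim, Fintype.card_fin] at hdeg
  omega
end

section
/- Fix an integer n ≥ 1 and work in ℚ^{n+1} with standard basis e_1,…,e_{n+1}. Define vectors ε_1,…,ε_{n+1} ∈ ℚ^{n+1} by ε_n = (e_n + e_{n+1})/2, ε_{n+1} = (e_{n+1} − e_n)/2, and ε_k = e_k + ε_{k+1} for 1 ≤ k ≤ n−1. For 1 ≤ i ≤ 2n+2 set w(i) = −ε_i if i ≤ n+1 and w(i) = ε_{2n+3−i} if i ≥ n+2. Let P = {(i,j) : 1 ≤ i ≤ j ≤ 2n+2} and for p = (i,j) ∈ P set wt(p) = w(i) + w(j). Let δ = Σ_{j=1}^{n−1} j(j−2n−1)·e_j − (n(n+1)/2)·(e_n + e_{n+1}). For a subset U ⊆ P and a vector χ ∈ ℚ^{n+1}, say U ⪰ χ if there exists c : U → ℚ_{≥0} with Σ_{p∈U} c_p = 1 such that every coordinate of Σ_{p∈U} c_p·wt(p) − χ is ≥ 0; say U is saturated if every p ∈ P with U ⪰ wt(p) belongs to U. For subsets I, J ⊆ {1,…,2n+2} let U_{I,J} = {(min(i,j), max(i,j)) : i ∈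 I, j ∈ J}, let U₀ = {(i,j) ∈ P : i < n, i + j < 2n+2} ∪ {(n,n),(n,n+1)}, and let U₁ = {(i,j) ∈ P : i < n, i + j < 2n+2} ∪ {(n,n),(n,n+2)}. Suppose U ⊆ P is saturated, U does not contain U₀, U does not contain U₁, and U does not contain U_{I,J} for any I, J ⊆ {1,…,2n+2} with #I + #J ≥ 2n+2. Then there exists c : P → ℚ_{≥0} with c_p = 0 for all p ∈ U, such that c is identically zero if U is empty and Σ_{p∈P} c_p < #U if U is nonempty, and such that every coordinate of the vector δ + Σ_{p∈P∖U} wt(p) + Σ_{p∈P} c_p·wt(p) is strictly negative. -/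
/-! **Statement 10.** The combinatorial cusp-cutting criterion (Condition 2 of the transference
theorem) for the representation of `PSO_{2n+2}` on symmetric `(2n+2)×(2n+2)` matrices.

Vectors in `ℚ^{n+1}` are encoded as functions `ℕ → ℚ`, with the coordinates of interest
being `1, …, n+1` (`1`-based indexing throughout). -/

/-- The standard basis vector `e_k`. -/
def stdVec (k : ℕ) : ℕ → ℚ := fun j => if j = k then 1 else 0

/-- The vectors `ε_1, …, ε_{n+1}`: `ε_n = (e_n + e_{n+1})/2`, `ε_{n+1} = (e_{n+1} − e_n)/2`,
and `ε_k = e_k + ε_{k+1}` for `1 ≤ k ≤ n−1`. -/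
def epsVec (n : ℕ) (k : ℕ) : ℕ → ℚ :=
  if k = n then fun j => (stdVec n j + stdVec (n + 1) j) / 2
  else if k = n + 1 then fun j => (stdVec (n + 1) j - stdVec n j) / 2
  else if _h : k < n then fun j => stdVec k j + epsVec n (k + 1) j
  else 0
termination_by n + 1 - k
decreasing_by omega

/-- The weight vector `w(i)` for `1 ≤ i ≤ 2n+2`: `w(i) = −ε_i` if `i ≤ n+1` and
`w(i) = ε_{2n+3−i}` if `i ≥ n+2`. -/
def wVec (n i : ℕ) : ℕ → ℚ := if i ≤ n + 1 then -epsVec n i else epsVec n (2 * n + 3 - i)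

/-- The index set `P = {(i,j) : 1 ≤ i ≤ j ≤ 2n+2}`. -/
def pairSet (n : ℕ) : Finset (ℕ × ℕ) :=
  (Finset.Icc 1 (2 * n + 2) ×ˢ Finset.Icc 1 (2 * n + 2)).filter fun p => p.1 ≤ p.2

/-- The weight `wt(p) = w(i) + w(j)` of a pair `p = (i,j)`. -/
def wtVec (n : ℕ) (p : ℕ × ℕ) : ℕ → ℚ := fun j => wVec n p.1 j + wVec n p.2 j

/-- The vector `δ = Σ_{j=1}^{n−1} j(j−2n−1)·e_j − (n(n+1)/2)·(e_n + e_{n+1})`. -/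
def deltaVec (n : ℕ) : ℕ → ℚ := fun x =>
  (∑ j ∈ Finset.Icc 1 (n - 1), (j : ℚ) * ((j : ℚ) - 2 * (n : ℚ) - 1) * stdVec j x)
    - (n : ℚ) * ((n : ℚ) + 1) / 2 * (stdVec n x + stdVec (n + 1) x)

/-- `U ⪰ χ` : there is `c : U → ℚ_{≥0}` with `Σ_{p∈U} c_p = 1` such that every coordinate of
`Σ_{p∈U} c_p·wt(p) − χ` is `≥ 0`. -/
def Dominates (n : ℕ) (U : Finset (ℕ × ℕ)) (χ : ℕ → ℚ) : Prop :=
  ∃ c : ℕ × ℕ → ℚ, (∀ p ∈ U, 0 ≤ c p) ∧ (∑ p ∈ U, c p) = 1 ∧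
    ∀ j ∈ Finset.Icc 1 (n + 1), χ j ≤ ∑ p ∈ U, c p * wtVec n p j

/-- `U` is saturated if every `p ∈ P` with `U ⪰ wt(p)` belongs to `U`. -/
def Saturated (n : ℕ) (U : Finset (ℕ × ℕ)) : Prop :=
  ∀ p ∈ pairSet n, Dominates n U (wtVec n p) → p ∈ U

/-- `U_{I,J} = {(min(i,j), max(i,j)) : i ∈ I, j ∈ J}`. -/
def UIJ (I J : Finset ℕ) : Finset (ℕ × ℕ) :=
  (I ×ˢ J).image fun p => (min p.1 p.2, max p.1 p.2)

/-- `U₀ = {(i,j) ∈ P : i < n, i + j < 2n+2} ∪ {(n,n), (n,n+1)}`. -/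
def U0 (n : ℕ) : Finset (ℕ × ℕ) :=
  ((pairSet n).filter fun p => p.1 < n ∧ p.1 + p.2 < 2 * n + 2) ∪ {(n, n), (n, n + 1)}

/-- `U₁ = {(i,j) ∈ P : i < n, i + j < 2n+2} ∪ {(n,n), (n,n+2)}`. -/
def U1 (n : ℕ) : Finset (ℕ × ℕ) :=
  ((pairSet n).filter fun p => p.1 < n ∧ p.1 + p.2 < 2 * n + 2) ∪ {(n, n), (n, n + 2)}

open Finset

namespace Cusp

lemma eps_le (n : ℕ) : ∀ d k : ℕ, k + d = n → 1 ≤ k →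
    ∀ j, 1 ≤ j → j ≤ n + 1 →
    epsVec n k j = if j = n then (1/2 : ℚ) else if j = n + 1 then (1/2 : ℚ)
      else if k ≤ j then 1 else 0 := by
  intro d
  induction d with
  | zero =>
    intro k hk _ j hj1 hj2
    have hkn : k = n := by omega
    subst hkn
    rw [epsVec]
    rw [if_pos rfl]
    simp only [stdVec]
    by_cases h1 : j = k
    · rw [if_pos h1, if_neg (by omega), if_pos h1]; try norm_num
    · by_cases h2 : j = k + 1
      · rw [if_neg h1, if_pos h2, if_neg h1, if_pos h2]; try norm_num
      · rw [if_neg h1, if_neg h2, if_neg h1, if_neg h2, if_neg (by omega : ¬ k ≤ j)]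
        try norm_num
  | succ d ih =>
    intro k hk hk1 j hj1 hj2
    have hklt : k < n := by omega
    rw [epsVec]
    rw [if_neg (by omega), if_neg (by omega), dif_pos hklt]
    rw [ih (k+1) (by omega) (by omega) j hj1 hj2]
    simp only [stdVec]
    split_ifs <;> (try (exfalso; omega)) <;> norm_num

lemma eps_top (n : ℕ) (hn : 1 ≤ n) (j : ℕ) (hj1 : 1 ≤ j) (hj2 : j ≤ n + 1) :
    epsVec n (n+1) j = if j = n then (-(1/2) : ℚ) else if j = n + 1 then (1/2 : ℚ) else 0 := by
  rw [epsVec]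
  rw [if_neg (by omega), if_pos rfl]
  simp only [stdVec]
  split_ifs <;> (try (exfalso; omega)) <;> norm_num

lemma eps_formula (n : ℕ) (hn : 1 ≤ n) (k j : ℕ) (hk1 : 1 ≤ k) (hk2 : k ≤ n + 1)
    (hj1 : 1 ≤ j) (hj2 : j ≤ n + 1) :
    epsVec n k j = if j = n then (if k = n + 1 then (-(1/2) : ℚ) else (1/2 : ℚ))
      else if j = n + 1 then (1/2 : ℚ) else if k ≤ j then 1 else 0 := by
  rcases Nat.lt_or_ge k (n+1) with h | h
  · rw [eps_le n (n - k) k (by omega) hk1 j hj1 hj2]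
    have : k ≠ n + 1 := by omega
    split_ifs <;> simp_all
  · have : k = n + 1 := by omega
    subst this
    rw [eps_top n hn j hj1 hj2]
    split_ifs <;> (try rfl) <;> (exfalso; omega)

/-- value of `w i` at a low coordinate `j ≤ n-1`. -/
lemma w_low (n i j : ℕ) (hi1 : 1 ≤ i) (hi2 : i ≤ 2*n+2) (hj1 : 1 ≤ j) (hj2 : j ≤ n - 1) :
    wVec n i j = (if i ≤ j then (-1 : ℚ) else 0) + (if 2*n+3-j ≤ i then (1:ℚ) else 0) := by
  have hn : 1 ≤ n := by omega
  by_cases h : i ≤ n + 1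
  · rw [wVec, if_pos h, Pi.neg_apply, eps_formula n hn i j hi1 h hj1 (by omega),
      if_neg (by omega : ¬ j = n), if_neg (by omega : ¬ j = n+1),
      if_neg (by omega : ¬ 2*n+3-j ≤ i)]
    by_cases h1 : i ≤ j
    · rw [if_pos h1, if_pos h1]; norm_num
    · rw [if_neg h1, if_neg h1]; norm_num
  · rw [wVec, if_neg h, eps_formula n hn (2*n+3-i) j (by omega) (by omega) hj1 (by omega),
      if_neg (by omega : ¬ j = n), if_neg (by omega : ¬ j = n+1),
      if_neg (by omega : ¬ i ≤ j)]
    by_cases h1 : 2*n+3-j ≤ i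
    · rw [if_pos (by omega : 2*n+3-i ≤ j), if_pos h1]; norm_num
    · rw [if_neg (by omega : ¬ 2*n+3-i ≤ j), if_neg h1]; norm_num

/-- value of `w i` at coordinate `n`. -/
lemma w_mid (n i : ℕ) (hn : 1 ≤ n) (hi1 : 1 ≤ i) (hi2 : i ≤ 2*n+2) :
    wVec n i n = if i ≤ n ∨ i = n + 2 then (-(1/2) : ℚ) else (1/2 : ℚ) := by
  by_cases h : i ≤ n + 1
  · rw [wVec, if_pos h, Pi.neg_apply, eps_formula n hn i n hi1 h (by omega) (by omega),
      if_pos rfl]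
    by_cases h1 : i ≤ n
    · rw [if_neg (by omega : ¬ i = n+1), if_pos (Or.inl h1)]; try norm_num
    · rw [if_pos (by omega : i = n+1), if_neg (by omega)]; try norm_num
  · rw [wVec, if_neg h, eps_formula n hn (2*n+3-i) n (by omega) (by omega) (by omega) (by omega),
      if_pos rfl]
    by_cases h1 : i = n + 2
    · rw [if_pos (by omega : 2*n+3-i = n+1), if_pos (Or.inr h1)]
    · rw [if_neg (by omega : ¬ 2*n+3-i = n+1), if_neg (by omega)]

/-- value of `w i` at coordinate `n+1`. -/
lemma w_mid1 (n i : ℕ) (hn : 1 ≤ n) (hi1 : 1 ≤ i) (hi2 : i ≤ 2*n+2) :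
    wVec n i (n+1) = if i ≤ n + 1 then (-(1/2) : ℚ) else (1/2 : ℚ) := by
  by_cases h : i ≤ n + 1
  · rw [wVec, if_pos h, Pi.neg_apply, eps_formula n hn i (n+1) hi1 h (by omega) (by omega),
      if_neg (by omega : ¬ n+1 = n), if_pos rfl, if_pos h]
    try norm_num
  · rw [wVec, if_neg h, eps_formula n hn (2*n+3-i) (n+1) (by omega) (by omega) (by omega) (by omega),
      if_neg (by omega : ¬ n+1 = n), if_pos rfl, if_neg h]

/-- reflection: `w(2n+3-i) = -w(i)`. -/
lemma w_reflect (n i : ℕ) (hi1 : 1 ≤ i) (hi2 : i ≤ 2*n+2) (j : ℕ) :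
    wVec n (2*n+3-i) j = - wVec n i j := by
  rcases Nat.lt_or_ge (n+1) i with h | h
  · rw [wVec, wVec, if_pos (by omega : 2*n+3-i ≤ n+1), if_neg (by omega : ¬ i ≤ n+1)]
    show -epsVec n (2*n+3-i) j = -(epsVec n (2*n+3-i) j)
    rfl
  · rw [wVec, wVec, if_neg (by omega : ¬ 2*n+3-i ≤ n+1), if_pos h]
    have h2 : 2*n+3 - (2*n+3-i) = i := by omega
    rw [h2]
    show epsVec n i j = -((-epsVec n i) j)
    simp

lemma delta_eval (n j : ℕ) (hn : 1 ≤ n) (hj1 : 1 ≤ j) (hj2 : j ≤ n + 1) :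
    deltaVec n j = if j ≤ n - 1 then (j:ℚ) * ((j:ℚ) - 2*(n:ℚ) - 1)
      else -((n:ℚ) * ((n:ℚ)+1) / 2) := by
  rw [deltaVec]
  by_cases h : j ≤ n - 1
  · rw [if_pos h]
    have hmem : j ∈ Finset.Icc 1 (n-1) := Finset.mem_Icc.mpr ⟨hj1, h⟩
    rw [Finset.sum_eq_single_of_mem j hmem]
    · have h2 : ¬ (j = n) := by omega
      have h3 : ¬ (j = n+1) := by omega
      simp [stdVec, h2, h3]
      try ring
    · intro b _ hbj
      have : ¬ (j = b) := fun hc => hbj hc.symm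
      simp only [stdVec, if_neg this]
      ring
  · rw [if_neg h]
    have hsum : (∑ i ∈ Finset.Icc 1 (n - 1), (i : ℚ) * ((i : ℚ) - 2 * (n : ℚ) - 1) * stdVec i j) = 0 := by
      apply Finset.sum_eq_zero
      intro i hi
      rw [Finset.mem_Icc] at hi
      have : ¬ (j = i) := by omega
      simp only [stdVec, if_neg this]
      ring
    rw [hsum]
    have hstd : stdVec n j + stdVec (n+1) j = 1 := by
      simp only [stdVec]
      rcases (by omega : j = n ∨ j = n + 1) with h1 | h1 <;> subst h1 <;>
        · split_ifs <;> (try (exfalso; omega)) <;> norm_num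
    rw [hstd]; ring

end Cusp

namespace Cusp

lemma mem_pairSet {n : ℕ} {p : ℕ × ℕ} :
    p ∈ pairSet n ↔ 1 ≤ p.1 ∧ p.1 ≤ p.2 ∧ p.2 ≤ 2*n+2 := by
  simp only [pairSet, Finset.mem_filter, Finset.mem_product, Finset.mem_Icc]
  omega

lemma sum_P_wt (n : ℕ) (j : ℕ) : (∑ p ∈ pairSet n, wtVec n p j) = 0 := by
  have key : (∑ p ∈ pairSet n, wtVec n p j) = ∑ p ∈ pairSet n, -(wtVec n p j) := by
    apply Finset.sum_nbij' (i := fun p => (2*n+3-p.2, 2*n+3-p.1))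
      (j := fun p => (2*n+3-p.2, 2*n+3-p.1))
    · intro a ha
      rw [mem_pairSet] at ha ⊢
      omega
    · intro a ha
      rw [mem_pairSet] at ha ⊢
      omega
    · intro a ha
      rw [mem_pairSet] at ha
      ext <;> simp <;> omega
    · intro a ha
      rw [mem_pairSet] at ha
      ext <;> simp <;> omega
    · intro a ha
      rw [mem_pairSet] at ha
      show wtVec n a j = -(wtVec n (2*n+3-a.2, 2*n+3-a.1) j)
      rw [wtVec, wtVec]
      show wVec n a.1 j + wVec n a.2 j = -(wVec n (2*n+3-a.2) j + wVec n (2*n+3-a.1) j)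
      rw [w_reflect n a.2 (by omega) (by omega), w_reflect n a.1 (by omega) (by omega)]
      ring
  have h2 : (2:ℚ) * ∑ p ∈ pairSet n, wtVec n p j = 0 := by
    rw [Finset.sum_neg_distrib] at key
    linarith
  linarith

def rowTop (n i : ℕ) : ℕ := if i = n then n+2 else 2*n+1-i

def Sset (n : ℕ) : Finset (ℕ × ℕ) :=
  (Finset.Icc 1 n).biUnion (fun i => {i} ×ˢ Finset.Icc i (rowTop n i))

lemma mem_Sset {n : ℕ} {p : ℕ × ℕ} :
    p ∈ Sset n ↔ 1 ≤ p.1 ∧ p.1 ≤ p.2 ∧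
      ((p.1 ≤ n ∧ p.1 + p.2 ≤ 2*n+1) ∨ (p.1 ≤ n ∧ p.2 = n+2)) := by
  simp only [Sset, Finset.mem_biUnion, Finset.mem_Icc, Finset.mem_product,
    Finset.mem_singleton]
  constructor
  · rintro ⟨i, hi, h1, h2⟩
    rw [rowTop] at h2
    subst h1
    split_ifs at h2 <;> omega
  · rintro h
    refine ⟨p.1, by omega, rfl, ?_⟩
    rw [rowTop]
    split_ifs <;> omega

lemma Sset_sub_pairSet {n : ℕ} : Sset n ⊆ pairSet n := by
  intro p hp
  rw [mem_Sset] at hp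
  rw [mem_pairSet]
  omega

/-- `wt ≤ 0` on `S`, all coordinates. -/
lemma wt_nonpos {n : ℕ} {p : ℕ × ℕ} (hp : p ∈ Sset n) (j : ℕ) (hj1 : 1 ≤ j) (hj2 : j ≤ n+1) :
    wtVec n p j ≤ 0 := by
  rw [mem_Sset] at hp
  have hn : 1 ≤ n := by omega
  rw [wtVec]
  rcases (by omega : (1 ≤ j ∧ j ≤ n - 1) ∨ j = n ∨ j = n + 1) with hj | hj | hj
  · rw [w_low n p.1 j (by omega) (by omega) hj.1 hj.2, w_low n p.2 j (by omega) (by omega) hj.1 hj.2]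
    split_ifs <;> (try norm_num) <;> omega
  · rw [hj]
    rw [w_mid n p.1 hn (by omega) (by omega), w_mid n p.2 hn (by omega) (by omega)]
    split_ifs <;> (try norm_num) <;> omega
  · rw [hj]
    rw [w_mid1 n p.1 hn (by omega) (by omega), w_mid1 n p.2 hn (by omega) (by omega)]
    split_ifs <;> (try norm_num) <;> omega

/-- saturation implies downward closure in the coordinatewise order on weights. -/
lemma mem_of_wt_le {n : ℕ} {U : Finset (ℕ × ℕ)} (hsat : Saturated n U)
    {q : ℕ × ℕ} (hq : q ∈ U) {p : ℕ × ℕ} (hp : p ∈ pairSet n)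
    (hle : ∀ j ∈ Finset.Icc 1 (n+1), wtVec n p j ≤ wtVec n q j) : p ∈ U := by
  apply hsat p hp
  refine ⟨fun r => if r = q then 1 else 0, ?_, ?_, ?_⟩
  · intro r _
    by_cases h : r = q <;> simp [h]
  · rw [Finset.sum_ite_eq' U q (fun _ => (1:ℚ)), if_pos hq]
  · intro j hj
    have : (∑ r ∈ U, (if r = q then (1:ℚ) else 0) * wtVec n r j)
        = ∑ r ∈ U, (if r = q then wtVec n r j else 0) := by
      apply Finset.sum_congr rfl
      intro r _
      split_ifs <;> ring
    rw [this, Finset.sum_ite_eq' U q (fun r => wtVec n r j), if_pos hq]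
    exact hle j hj

def Dset (n k : ℕ) : Finset ℕ :=
  if k = n+2 then insert (n+2) (Finset.Icc 1 n) else Finset.Icc 1 k

lemma mem_Dset {n k a : ℕ} (h : a ∈ Dset n k) :
    1 ≤ a ∧ a ≤ k ∧ (k = n+2 → a ≠ n+1) := by
  rw [Dset] at h
  split_ifs at h with hk
  · simp only [Finset.mem_insert, Finset.mem_Icc] at h
    omega
  · rw [Finset.mem_Icc] at h
    omega

lemma card_Dset {n k : ℕ} (hk : 1 ≤ k) :
    (Dset n k).card = if k = n+2 then n+1 else k := by
  rw [Dset]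
  split_ifs with hk2
  · rw [Finset.card_insert_of_notMem (by simp [Finset.mem_Icc])]
    rw [Nat.card_Icc]
    omega
  · rw [Nat.card_Icc]
    omega

lemma Dset_sub {n k : ℕ} (hk1 : 1 ≤ k) (hk : k ≤ 2*n+2) :
    Dset n k ⊆ Finset.Icc 1 (2*n+2) := by
  intro a ha
  have := mem_Dset ha
  rw [Finset.mem_Icc]
  omega

/-- monotonicity of `w` along the index order (avoiding the `n+1 / n+2` crossing). -/
lemma w_mono {n a k : ℕ} (ha : 1 ≤ a) (hak : a ≤ k) (hk : k ≤ 2*n+2) (hn : 1 ≤ n)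
    (hcross : k = n+2 → a ≠ n+1) (j : ℕ) (hj1 : 1 ≤ j) (hj2 : j ≤ n+1) :
    wVec n a j ≤ wVec n k j := by
  rcases (by omega : (1 ≤ j ∧ j ≤ n - 1) ∨ j = n ∨ j = n + 1) with hj | hj | hj
  · rw [w_low n a j ha (by omega) hj.1 hj.2, w_low n k j (by omega) hk hj.1 hj.2]
    split_ifs <;> (try norm_num) <;> omega
  · rw [hj]
    rw [w_mid n a hn ha (by omega), w_mid n k hn (by omega) hk]
    split_ifs <;> (try norm_num) <;> omega
  · rw [hj]
    rw [w_mid1 n a hn ha (by omega), w_mid1 n k hn (by omega) hk]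
    split_ifs <;> (try norm_num) <;> omega

lemma wt_sorted (n a b j : ℕ) :
    wtVec n (min a b, max a b) j = wVec n a j + wVec n b j := by
  rcases le_total a b with h | h
  · rw [min_eq_left h, max_eq_right h]; rfl
  · rw [min_eq_right h, max_eq_left h]
    show wVec n b j + wVec n a j = _
    ring

/-- Under the hypotheses, `U ⊆ S`. -/
lemma U_sub_Sset {n : ℕ} {U : Finset (ℕ × ℕ)} (hn : 1 ≤ n) (hUP : U ⊆ pairSet n)
    (hsat : Saturated n U)
    (hUIJ : ∀ I J : Finset ℕ, I ⊆ Finset.Icc 1 (2 * n + 2) → J ⊆ Finset.Icc 1 (2 * n + 2) →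
      2 * n + 2 ≤ I.card + J.card → ¬ UIJ I J ⊆ U) :
    U ⊆ Sset n := by
  intro q hq
  by_contra hns
  have hqP := hUP hq
  rw [mem_pairSet] at hqP
  apply hUIJ (Dset n q.1) (Dset n q.2) (Dset_sub (by omega) (by omega))
    (Dset_sub (by omega) (by omega))
  · -- card bound
    rw [card_Dset (by omega : 1 ≤ q.1), card_Dset (by omega : 1 ≤ q.2)]
    rw [mem_Sset] at hns
    split_ifs <;> omega
  · -- UIJ ⊆ U
    intro p hp
    rw [UIJ, Finset.mem_image] at hp
    obtain ⟨r, hr, hrp⟩ := hp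
    rw [Finset.mem_product] at hr
    obtain ⟨ha, hb⟩ := hr
    have hma := mem_Dset ha
    have hmb := mem_Dset hb
    apply mem_of_wt_le hsat hq
    · rw [mem_pairSet, ← hrp]
      simp only []
      constructor
      · simp only [le_min_iff]; omega
      constructor
      · exact min_le_max
      · simp only [max_le_iff]; omega
    · intro j hj
      rw [Finset.mem_Icc] at hj
      rw [← hrp, wt_sorted]
      rw [wtVec]
      have h1 : wVec n r.1 j ≤ wVec n q.1 j :=
        w_mono hma.1 hma.2.1 (by omega) hn hma.2.2 j hj.1 hj.2
      have h2 : wVec n r.2 j ≤ wVec n q.2 j :=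
        w_mono hmb.1 hmb.2.1 (by omega) hn hmb.2.2 j hj.1 hj.2
      exact add_le_add h1 h2

end Cusp

namespace Cusp

lemma gaussQ : ∀ m : ℕ, (∑ i ∈ Finset.Icc 1 m, (i:ℚ)) = (m:ℚ)*((m:ℚ)+1)/2 := by
  intro m
  induction m with
  | zero => simp
  | succ m ih =>
    rw [Finset.sum_Icc_succ_top (by omega : 1 ≤ m+1), ih]
    push_cast
    ring

lemma sum_biUnion_S (n : ℕ) (f : ℕ × ℕ → ℚ) :
    (∑ p ∈ Sset n, f p) = ∑ i ∈ Finset.Icc 1 n, ∑ b ∈ Finset.Icc i (rowTop n i), f (i, b) := by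
  rw [Sset, Finset.sum_biUnion]
  · apply Finset.sum_congr rfl
    intro i _
    rw [Finset.sum_product]
    rw [Finset.sum_singleton]
  · intro a _ b _ hab
    apply Finset.disjoint_left.mpr
    intro p hp hq
    rw [Finset.mem_product, Finset.mem_singleton] at hp hq
    exact hab (hp.1 ▸ hq.1)

lemma row_low (n i j : ℕ) (hi1 : 1 ≤ i) (hi2 : i ≤ n) (hj1 : 1 ≤ j) (hj2 : j ≤ n-1) :
    (∑ b ∈ Finset.Icc i (rowTop n i), -(wtVec n (i, b) j))
      = (if i ≤ j then ((2*n+2-2*i : ℕ):ℚ) else 0) + ((j+1-i : ℕ):ℚ) - ((j-1-i : ℕ):ℚ) := by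
  have hrt1 : i ≤ rowTop n i + 1 := by rw [rowTop]; split_ifs <;> omega
  have hrt : rowTop n i ≤ 2*n+2 := by rw [rowTop]; split_ifs <;> omega
  have step : ∀ b ∈ Finset.Icc i (rowTop n i),
      (-(wtVec n (i,b) j)) = (if i ≤ j then (1:ℚ) else 0)
        + ((if b ≤ j then (1:ℚ) else 0) - (if 2*n+3-j ≤ b then (1:ℚ) else 0)) := by
    intro b hb
    rw [Finset.mem_Icc] at hb
    show -(wVec n i j + wVec n b j) = _
    rw [w_low n i j hi1 (by omega) hj1 hj2, w_low n b j (by omega) (by omega) hj1 hj2,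
        if_neg (by omega : ¬ 2*n+3-j ≤ i)]
    split_ifs <;> ring
  rw [Finset.sum_congr rfl step, Finset.sum_add_distrib, Finset.sum_sub_distrib]
  have hS1 : (∑ _b ∈ Finset.Icc i (rowTop n i), (if i ≤ j then (1:ℚ) else 0))
      = (if i ≤ j then ((2*n+2-2*i : ℕ):ℚ) else 0) := by
    rw [Finset.sum_const, Nat.card_Icc]
    by_cases h : i ≤ j
    · rw [if_pos h, if_pos h]
      have : rowTop n i = 2*n+1-i := by rw [rowTop]; split_ifs <;> omega
      rw [this]
      have : 2*n+1-i+1-i = 2*n+2-2*i := by omega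
      rw [this, nsmul_eq_mul, mul_one]
    · rw [if_neg h, if_neg h, smul_zero]
  have hS2 : (∑ b ∈ Finset.Icc i (rowTop n i), (if b ≤ j then (1:ℚ) else 0))
      = ((j+1-i : ℕ):ℚ) := by
    rw [← Finset.sum_filter]
    have hfil : (Finset.Icc i (rowTop n i)).filter (fun b => b ≤ j) = Finset.Icc i j := by
      ext t
      simp only [Finset.mem_filter, Finset.mem_Icc]
      have : j ≤ rowTop n i := by rw [rowTop]; split_ifs <;> omega
      omega
    rw [hfil, Finset.sum_const, Nat.card_Icc, nsmul_eq_mul, mul_one]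
  have hS3 : (∑ b ∈ Finset.Icc i (rowTop n i), (if 2*n+3-j ≤ b then (1:ℚ) else 0))
      = ((j-1-i : ℕ):ℚ) := by
    rw [← Finset.sum_filter]
    have hfil : (Finset.Icc i (rowTop n i)).filter (fun b => 2*n+3-j ≤ b)
        = Finset.Icc (2*n+3-j) (rowTop n i) := by
      ext t
      simp only [Finset.mem_filter, Finset.mem_Icc]
      omega
    rw [hfil, Finset.sum_const, Nat.card_Icc, nsmul_eq_mul, mul_one]
    congr 1
    rw [rowTop]
    split_ifs <;> omega
  rw [hS1, hS2, hS3]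
  ring

lemma row_mid (n i : ℕ) (hn : 1 ≤ n) (hi1 : 1 ≤ i) (hi2 : i ≤ n) :
    (∑ b ∈ Finset.Icc i (rowTop n i), -(wtVec n (i, b) n)) = ((n+2-i : ℕ):ℚ) := by
  have hrt : rowTop n i ≤ 2*n+2 := by rw [rowTop]; split_ifs <;> omega
  have step : ∀ b ∈ Finset.Icc i (rowTop n i),
      (-(wtVec n (i,b) n)) = 1 - (if b = n+1 ∨ n+3 ≤ b then (1:ℚ) else 0) := by
    intro b hb
    rw [Finset.mem_Icc] at hb
    show -(wVec n i n + wVec n b n) = _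
    rw [w_mid n i hn hi1 (by omega), w_mid n b hn (by omega) (by omega),
        if_pos (by omega : i ≤ n ∨ i = n+2)]
    by_cases h : b ≤ n ∨ b = n+2
    · rw [if_pos h, if_neg (by omega)]; norm_num
    · rw [if_neg h, if_pos (by omega)]; norm_num
  rw [Finset.sum_congr rfl step, Finset.sum_sub_distrib]
  rw [Finset.sum_const, Nat.card_Icc, ← Finset.sum_filter]
  have hfil : (Finset.Icc i (rowTop n i)).filter (fun b => b = n+1 ∨ n+3 ≤ b)
      = insert (n+1) (Finset.Icc (n+3) (rowTop n i)) := by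
    ext t
    simp only [Finset.mem_filter, Finset.mem_Icc, Finset.mem_insert]
    have : n+1 ≤ rowTop n i := by rw [rowTop]; split_ifs <;> omega
    omega
  rw [hfil, Finset.sum_insert (by simp [Finset.mem_Icc]), Finset.sum_const, Nat.card_Icc,
    nsmul_eq_mul, mul_one, nsmul_eq_mul, mul_one]
  have h2 : (rowTop n i + 1 - (n+3) : ℕ) = n-1-i := by rw [rowTop]; split_ifs <;> omega
  have hA : (rowTop n i + 1 - i : ℕ) = (n+2-i) + (1 + (n-1-i)) := by
    rw [rowTop]; split_ifs <;> omega
  rw [h2, hA]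
  push_cast
  ring

lemma row_mid1 (n i : ℕ) (hn : 1 ≤ n) (hi1 : 1 ≤ i) (hi2 : i ≤ n) :
    (∑ b ∈ Finset.Icc i (rowTop n i), -(wtVec n (i, b) (n+1))) = ((n+2-i : ℕ):ℚ) := by
  have hrt : rowTop n i ≤ 2*n+2 := by rw [rowTop]; split_ifs <;> omega
  have step : ∀ b ∈ Finset.Icc i (rowTop n i),
      (-(wtVec n (i,b) (n+1))) = 1 - (if n+2 ≤ b then (1:ℚ) else 0) := by
    intro b hb
    rw [Finset.mem_Icc] at hb
    show -(wVec n i (n+1) + wVec n b (n+1)) = _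
    rw [w_mid1 n i hn hi1 (by omega), w_mid1 n b hn (by omega) (by omega),
        if_pos (by omega : i ≤ n+1)]
    by_cases h : b ≤ n+1
    · rw [if_pos h, if_neg (by omega)]; norm_num
    · rw [if_neg h, if_pos (by omega)]; norm_num
  rw [Finset.sum_congr rfl step, Finset.sum_sub_distrib]
  rw [Finset.sum_const, Nat.card_Icc, ← Finset.sum_filter]
  have hfil : (Finset.Icc i (rowTop n i)).filter (fun b => n+2 ≤ b)
      = Finset.Icc (n+2) (rowTop n i) := by
    ext t
    simp only [Finset.mem_filter, Finset.mem_Icc]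
    omega
  rw [hfil, Finset.sum_const, Nat.card_Icc, nsmul_eq_mul, mul_one, nsmul_eq_mul, mul_one]
  by_cases hni : i = n
  · have e1 : rowTop n i = n+2 := by rw [rowTop, if_pos hni]
    rw [e1]
    have e2 : (n+2+1-i : ℕ) = 3 := by omega
    have e3 : (n+2+1-(n+2) : ℕ) = 1 := by omega
    have e4 : (n+2-i : ℕ) = 2 := by omega
    rw [e2, e3, e4]
    norm_num
  · have h2 : (rowTop n i + 1 - (n+2) : ℕ) = n-i := by rw [rowTop, if_neg hni]; omega
    have hA : (rowTop n i + 1 - i : ℕ) = (n+2-i) + (n-i) := by rw [rowTop, if_neg hni]; omega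
    rw [h2, hA]
    push_cast
    ring

/-- The key sum: `∑_{p∈S} (-wt(p)_j)` for low coordinates. -/
lemma key_low (n j : ℕ) (hn : 1 ≤ n) (hj1 : 1 ≤ j) (hj2 : j ≤ n-1) :
    (∑ p ∈ Sset n, -(wtVec n p j)) = (2*(n:ℚ)+2)*(j:ℚ) - (j:ℚ)^2 + (j:ℚ) - 1 := by
  rw [sum_biUnion_S]
  have step : ∀ i ∈ Finset.Icc 1 n,
      (∑ b ∈ Finset.Icc i (rowTop n i), -(wtVec n (i, b) j))
        = (if i ≤ j then ((2*n+2-2*i : ℕ):ℚ) else 0)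
          + (if i ≤ j-1 then (2:ℚ) else if i = j then 1 else 0) := by
    intro i hi
    rw [Finset.mem_Icc] at hi
    rw [row_low n i j hi.1 hi.2 hj1 hj2]
    have : ((j+1-i : ℕ):ℚ) - ((j-1-i : ℕ):ℚ)
        = (if i ≤ j-1 then (2:ℚ) else if i = j then 1 else 0) := by
      by_cases h1 : i ≤ j-1
      · rw [if_pos h1]
        have e1 : (j+1-i : ℕ) = (j-1-i) + 2 := by omega
        rw [e1]; push_cast; ring
      · rw [if_neg h1]
        by_cases h2 : i = j
        · rw [if_pos h2]
          have e1 : (j+1-i : ℕ) = 1 := by omega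
          have e2 : (j-1-i : ℕ) = 0 := by omega
          rw [e1, e2]; norm_num
        · rw [if_neg h2]
          have e1 : (j+1-i : ℕ) = 0 := by omega
          have e2 : (j-1-i : ℕ) = 0 := by omega
          rw [e1, e2]; norm_num
    rw [add_sub_assoc, this]
  rw [Finset.sum_congr rfl step, Finset.sum_add_distrib]
  have hA : (∑ i ∈ Finset.Icc 1 n, (if i ≤ j then ((2*n+2-2*i : ℕ):ℚ) else 0))
      = (2*(n:ℚ)+2)*(j:ℚ) - (j:ℚ)*((j:ℚ)+1) := by
    rw [← Finset.sum_filter]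
    have hfil : (Finset.Icc 1 n).filter (fun i => i ≤ j) = Finset.Icc 1 j := by
      ext t
      simp only [Finset.mem_filter, Finset.mem_Icc]
      omega
    rw [hfil]
    have step2 : ∀ i ∈ Finset.Icc 1 j, ((2*n+2-2*i : ℕ):ℚ) = (2*(n:ℚ)+2) - 2*(i:ℚ) := by
      intro i hi
      rw [Finset.mem_Icc] at hi
      push_cast [Nat.cast_sub (by omega : 2*i ≤ 2*n+2)]
      ring
    rw [Finset.sum_congr rfl step2, Finset.sum_sub_distrib, Finset.sum_const, Nat.card_Icc,
      ← Finset.mul_sum, gaussQ]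
    have : (j+1-1 : ℕ) = j := by omega
    rw [this, nsmul_eq_mul]
    ring
  have hB : (∑ i ∈ Finset.Icc 1 n, (if i ≤ j-1 then (2:ℚ) else if i = j then 1 else 0))
      = 2*((j:ℚ)-1) + 1 := by
    have step3 : ∀ i ∈ Finset.Icc 1 n,
        (if i ≤ j-1 then (2:ℚ) else if i = j then 1 else 0)
        = (if i ≤ j-1 then (2:ℚ) else 0) + (if i = j then 1 else 0) := by
      intro i _
      by_cases h1 : i ≤ j-1
      · rw [if_pos h1, if_pos h1, if_neg (by omega)]; ring
      · rw [if_neg h1, if_neg h1]; ring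
    rw [Finset.sum_congr rfl step3, Finset.sum_add_distrib]
    rw [← Finset.sum_filter]
    have hfil : (Finset.Icc 1 n).filter (fun i => i ≤ j-1) = Finset.Icc 1 (j-1) := by
      ext t
      simp only [Finset.mem_filter, Finset.mem_Icc]
      omega
    rw [hfil, Finset.sum_const, Nat.card_Icc, Finset.sum_ite_eq' (Finset.Icc 1 n) j (fun _ => (1:ℚ)),
      if_pos (Finset.mem_Icc.mpr ⟨hj1, by omega⟩)]
    have e5 : (j-1+1-1 : ℕ) = j-1 := by omega
    rw [e5, nsmul_eq_mul]
    have e6 : ((j-1 : ℕ):ℚ) = (j:ℚ)-1 := by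
      push_cast [Nat.cast_sub (by omega : 1 ≤ j)]; ring
    rw [e6]
    ring
  rw [hA, hB]
  ring

lemma key_mid (n : ℕ) (hn : 1 ≤ n) :
    (∑ p ∈ Sset n, -(wtVec n p n)) = ((n:ℚ)^2+3*(n:ℚ))/2 := by
  rw [sum_biUnion_S]
  have step : ∀ i ∈ Finset.Icc 1 n,
      (∑ b ∈ Finset.Icc i (rowTop n i), -(wtVec n (i, b) n)) = ((n:ℚ)+2) - (i:ℚ) := by
    intro i hi
    rw [Finset.mem_Icc] at hi
    rw [row_mid n i hn hi.1 hi.2]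
    push_cast [Nat.cast_sub (by omega : i ≤ n+2)]
    ring
  rw [Finset.sum_congr rfl step, Finset.sum_sub_distrib, Finset.sum_const, Nat.card_Icc, gaussQ]
  have : (n+1-1 : ℕ) = n := by omega
  rw [this, nsmul_eq_mul]
  ring

lemma key_mid1 (n : ℕ) (hn : 1 ≤ n) :
    (∑ p ∈ Sset n, -(wtVec n p (n+1))) = ((n:ℚ)^2+3*(n:ℚ))/2 := by
  rw [sum_biUnion_S]
  have step : ∀ i ∈ Finset.Icc 1 n,
      (∑ b ∈ Finset.Icc i (rowTop n i), -(wtVec n (i, b) (n+1))) = ((n:ℚ)+2) - (i:ℚ) := by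
    intro i hi
    rw [Finset.mem_Icc] at hi
    rw [row_mid1 n i hn hi.1 hi.2]
    push_cast [Nat.cast_sub (by omega : i ≤ n+2)]
    ring
  rw [Finset.sum_congr rfl step, Finset.sum_sub_distrib, Finset.sum_const, Nat.card_Icc, gaussQ]
  have : (n+1-1 : ℕ) = n := by omega
  rw [this, nsmul_eq_mul]
  ring

end Cusp

namespace Cusp

/-- the disjoint "capacity" sets indexed by slots `0, 1, …, n+1`. -/
def Qset (n s : ℕ) : Finset (ℕ × ℕ) :=
  if s = 0 then (Finset.Icc 1 n) ×ˢ {n}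
  else if s = n then (Finset.Icc 1 n) ×ˢ {n+2}
  else if s = n+1 then (Finset.Icc 1 n) ×ˢ {n+1}
  else (Finset.Icc 1 s) ×ˢ {s} ∪ (Finset.Icc 1 (s-1)) ×ˢ {2*n+2-s}

lemma mem_Qset_zero {n : ℕ} {p : ℕ × ℕ} :
    p ∈ Qset n 0 ↔ 1 ≤ p.1 ∧ p.1 ≤ n ∧ p.2 = n := by
  rw [Qset, if_pos rfl]
  simp only [Finset.mem_product, Finset.mem_Icc, Finset.mem_singleton]
  omega

lemma mem_Qset_n {n : ℕ} {p : ℕ × ℕ} (hn : 1 ≤ n) :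
    p ∈ Qset n n ↔ 1 ≤ p.1 ∧ p.1 ≤ n ∧ p.2 = n+2 := by
  rw [Qset, if_neg (by omega), if_pos rfl]
  simp only [Finset.mem_product, Finset.mem_Icc, Finset.mem_singleton]
  omega

lemma mem_Qset_n1 {n : ℕ} {p : ℕ × ℕ} (hn : 1 ≤ n) :
    p ∈ Qset n (n+1) ↔ 1 ≤ p.1 ∧ p.1 ≤ n ∧ p.2 = n+1 := by
  rw [Qset, if_neg (by omega), if_neg (by omega), if_pos rfl]
  simp only [Finset.mem_product, Finset.mem_Icc, Finset.mem_singleton]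
  omega

lemma mem_Qset_low {n s : ℕ} {p : ℕ × ℕ} (hs1 : 1 ≤ s) (hs2 : s ≤ n-1) :
    p ∈ Qset n s ↔ (1 ≤ p.1 ∧ p.1 ≤ s ∧ p.2 = s) ∨ (1 ≤ p.1 ∧ p.1 ≤ s-1 ∧ p.2 = 2*n+2-s) := by
  rw [Qset, if_neg (by omega), if_neg (by omega), if_neg (by omega)]
  simp only [Finset.mem_union, Finset.mem_product, Finset.mem_Icc, Finset.mem_singleton]
  omega

lemma Qset_sub_Sset {n s : ℕ} (hn : 1 ≤ n) (hs : s ≤ n+1) : Qset n s ⊆ Sset n := by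
  intro p hp
  rw [mem_Sset]
  by_cases h0 : s = 0
  · subst h0; rw [mem_Qset_zero] at hp; omega
  by_cases h1 : s = n
  · subst h1; rw [mem_Qset_n hn] at hp; omega
  by_cases h2 : s = n+1
  · subst h2; rw [mem_Qset_n1 hn] at hp; omega
  · rw [mem_Qset_low (by omega) (by omega)] at hp; omega

lemma card_Qset_zero {n : ℕ} : (Qset n 0).card = n := by
  rw [Qset, if_pos rfl, Finset.card_product, Finset.card_singleton, Nat.card_Icc]
  omega

lemma card_Qset_n {n : ℕ} (hn : 1 ≤ n) : (Qset n n).card = n := by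
  rw [Qset, if_neg (by omega), if_pos rfl, Finset.card_product, Finset.card_singleton,
    Nat.card_Icc]
  omega

lemma card_Qset_n1 {n : ℕ} (hn : 1 ≤ n) : (Qset n (n+1)).card = n := by
  rw [Qset, if_neg (by omega), if_neg (by omega), if_pos rfl, Finset.card_product,
    Finset.card_singleton, Nat.card_Icc]
  omega

lemma card_Qset_low {n s : ℕ} (hs1 : 1 ≤ s) (hs2 : s ≤ n-1) :
    (Qset n s).card = 2*s-1 := by
  rw [Qset, if_neg (by omega), if_neg (by omega), if_neg (by omega)]
  rw [Finset.card_union_of_disjoint]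
  · rw [Finset.card_product, Finset.card_product, Finset.card_singleton,
      Finset.card_singleton, Nat.card_Icc, Nat.card_Icc]
    omega
  · apply Finset.disjoint_left.mpr
    intro p hp hq
    rw [Finset.mem_product, Finset.mem_singleton] at hp hq
    omega

/-- the second coordinate determines the slot, giving disjointness. -/
lemma Qset_snd {n s : ℕ} {p : ℕ × ℕ} (hn : 1 ≤ n) (hs : s ≤ n+1) (hp : p ∈ Qset n s) :
    (p.2 = n ∧ s = 0) ∨ (p.2 = n+2 ∧ s = n) ∨ (p.2 = n+1 ∧ s = n+1) ∨
    (1 ≤ s ∧ s ≤ n-1 ∧ (p.2 = s ∨ p.2 = 2*n+2-s)) := by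
  by_cases h0 : s = 0
  · subst h0; rw [mem_Qset_zero] at hp; omega
  by_cases h1 : s = n
  · subst h1; rw [mem_Qset_n hn] at hp; omega
  by_cases h2 : s = n+1
  · subst h2; rw [mem_Qset_n1 hn] at hp; omega
  · rw [mem_Qset_low (by omega) (by omega)] at hp; omega

lemma Qset_disjoint {n : ℕ} (hn : 1 ≤ n) {s t : ℕ} (hs : s ≤ n+1) (ht : t ≤ n+1)
    (hst : s ≠ t) : Disjoint (Qset n s) (Qset n t) := by
  apply Finset.disjoint_left.mpr
  intro p hp hq
  have h1 := Qset_snd hn hs hp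
  have h2 := Qset_snd hn ht hq
  omega

end Cusp

namespace Cusp

lemma wt_h (n i j : ℕ) (hi1 : 1 ≤ i) (hi2 : i ≤ n-1) (hj1 : 1 ≤ j) (hj2 : j ≤ n+1) :
    wtVec n (i, 2*n+2-i) j = if j = i then (-1:ℚ) else 0 := by
  have hn : 1 ≤ n := by omega
  show wVec n i j + wVec n (2*n+2-i) j = _
  rcases (by omega : (1 ≤ j ∧ j ≤ n - 1) ∨ j = n ∨ j = n + 1) with hj | hj | hj
  · rw [w_low n i j hi1 (by omega) hj.1 hj.2, w_low n (2*n+2-i) j (by omega) (by omega) hj.1 hj.2,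
      if_neg (by omega : ¬ 2*n+3-j ≤ i), if_neg (by omega : ¬ 2*n+2-i ≤ j)]
    by_cases h1 : j = i
    · rw [if_pos (by omega : i ≤ j), if_neg (by omega : ¬ 2*n+3-j ≤ 2*n+2-i), if_pos h1]
      norm_num
    · by_cases h2 : i ≤ j
      · rw [if_pos h2, if_pos (by omega : 2*n+3-j ≤ 2*n+2-i), if_neg h1]
        norm_num
      · rw [if_neg h2, if_neg (by omega : ¬ 2*n+3-j ≤ 2*n+2-i), if_neg h1]
        norm_num
  · rw [hj, w_mid n i hn hi1 (by omega), w_mid n (2*n+2-i) hn (by omega) (by omega),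
      if_pos (by omega : i ≤ n ∨ i = n+2), if_neg (by omega : ¬ (2*n+2-i ≤ n ∨ 2*n+2-i = n+2)),
      if_neg (by omega : ¬ n = i)]
    norm_num
  · rw [hj, w_mid1 n i hn hi1 (by omega), w_mid1 n (2*n+2-i) hn (by omega) (by omega),
      if_pos (by omega : i ≤ n+1), if_neg (by omega : ¬ 2*n+2-i ≤ n+1),
      if_neg (by omega : ¬ n+1 = i)]
    norm_num

lemma wt_g1 (n j : ℕ) (hn : 1 ≤ n) (hj1 : 1 ≤ j) (hj2 : j ≤ n+1) :
    wtVec n (n+1, n+1) j = if j = n then (1:ℚ) else if j = n+1 then (-1:ℚ) else 0 := by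
  show wVec n (n+1) j + wVec n (n+1) j = _
  rcases (by omega : (1 ≤ j ∧ j ≤ n - 1) ∨ j = n ∨ j = n + 1) with hj | hj | hj
  · rw [w_low n (n+1) j (by omega) (by omega) hj.1 hj.2,
      if_neg (by omega : ¬ n+1 ≤ j), if_neg (by omega : ¬ 2*n+3-j ≤ n+1),
      if_neg (by omega : ¬ j = n), if_neg (by omega : ¬ j = n+1)]
    norm_num
  · rw [hj, w_mid n (n+1) hn (by omega) (by omega),
      if_neg (by omega : ¬ (n+1 ≤ n ∨ n+1 = n+2)), if_pos rfl]
    norm_num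
  · rw [hj, w_mid1 n (n+1) hn (by omega) (by omega), if_pos (by omega : n+1 ≤ n+1),
      if_neg (by omega : ¬ n+1 = n), if_pos rfl]
    norm_num

lemma wt_g2 (n j : ℕ) (hn : 1 ≤ n) (hj1 : 1 ≤ j) (hj2 : j ≤ n+1) :
    wtVec n (n+2, n+2) j = if j = n then (-1:ℚ) else if j = n+1 then (1:ℚ) else 0 := by
  show wVec n (n+2) j + wVec n (n+2) j = _
  rcases (by omega : (1 ≤ j ∧ j ≤ n - 1) ∨ j = n ∨ j = n + 1) with hj | hj | hj
  · rw [w_low n (n+2) j (by omega) (by omega) hj.1 hj.2,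
      if_neg (by omega : ¬ n+2 ≤ j), if_neg (by omega : ¬ 2*n+3-j ≤ n+2),
      if_neg (by omega : ¬ j = n), if_neg (by omega : ¬ j = n+1)]
    norm_num
  · rw [hj, w_mid n (n+2) hn (by omega) (by omega),
      if_pos (by omega : n+2 ≤ n ∨ n+2 = n+2), if_pos rfl]
    norm_num
  · rw [hj, w_mid1 n (n+2) hn (by omega) (by omega), if_neg (by omega : ¬ n+2 ≤ n+1),
      if_neg (by omega : ¬ n+1 = n), if_pos rfl]
    norm_num

lemma wt_mid_cases (n : ℕ) (p : ℕ × ℕ) (hn : 1 ≤ n) (hp : p ∈ pairSet n) :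
    (wtVec n p n = -1 ∨ wtVec n p n = 0 ∨ wtVec n p n = 1) ∧
    (wtVec n p (n+1) = -1 ∨ wtVec n p (n+1) = 0 ∨ wtVec n p (n+1) = 1) := by
  rw [mem_pairSet] at hp
  constructor
  · have e : wtVec n p n = wVec n p.1 n + wVec n p.2 n := rfl
    rw [e, w_mid n p.1 hn (by omega) (by omega), w_mid n p.2 hn (by omega) (by omega)]
    split_ifs <;> norm_num
  · have e : wtVec n p (n+1) = wVec n p.1 (n+1) + wVec n p.2 (n+1) := rfl
    rw [e, w_mid1 n p.1 hn (by omega) (by omega), w_mid1 n p.2 hn (by omega) (by omega)]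
    split_ifs <;> norm_num

lemma wtn_neg {n : ℕ} {p : ℕ × ℕ} (hp : p ∈ Sset n) (h : p.2 ≤ n ∨ p.2 = n+2) :
    wtVec n p n ≤ -1 := by
  rw [mem_Sset] at hp
  have hn : 1 ≤ n := by omega
  show wVec n p.1 n + wVec n p.2 n ≤ -1
  rw [w_mid n p.1 hn (by omega) (by omega), w_mid n p.2 hn (by omega) (by omega),
    if_pos (by omega : p.1 ≤ n ∨ p.1 = n+2), if_pos h]
  norm_num

lemma wtn1_neg {n : ℕ} {p : ℕ × ℕ} (hp : p ∈ Sset n) (h : p.2 ≤ n+1) :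
    wtVec n p (n+1) ≤ -1 := by
  rw [mem_Sset] at hp
  have hn : 1 ≤ n := by omega
  show wVec n p.1 (n+1) + wVec n p.2 (n+1) ≤ -1
  rw [w_mid1 n p.1 hn (by omega) (by omega), w_mid1 n p.2 hn (by omega) (by omega),
    if_pos (by omega : p.1 ≤ n+1), if_pos h]
  norm_num

lemma wt_low_slot {n s : ℕ} {p : ℕ × ℕ} (hs1 : 1 ≤ s) (hs2 : s ≤ n-1)
    (hp : p ∈ Qset n s) : wtVec n p s ≤ -1 := by
  rw [mem_Qset_low hs1 hs2] at hp
  have hn : 1 ≤ n := by omega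
  show wVec n p.1 s + wVec n p.2 s ≤ -1
  rcases hp with h | h
  · rw [w_low n p.1 s (by omega) (by omega) hs1 hs2, w_low n p.2 s (by omega) (by omega) hs1 hs2,
      if_pos (by omega : p.1 ≤ s), if_neg (by omega : ¬ 2*n+3-s ≤ p.1),
      if_pos (by omega : p.2 ≤ s), if_neg (by omega : ¬ 2*n+3-s ≤ p.2)]
    norm_num
  · rw [w_low n p.1 s (by omega) (by omega) hs1 hs2, w_low n p.2 s (by omega) (by omega) hs1 hs2,
      if_pos (by omega : p.1 ≤ s), if_neg (by omega : ¬ 2*n+3-s ≤ p.1),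
      if_neg (by omega : ¬ p.2 ≤ s), if_neg (by omega : ¬ 2*n+3-s ≤ p.2)]
    norm_num

lemma wt_own {n : ℕ} {p : ℕ × ℕ} (hp : p ∈ Sset n) (h1 : p.1 ≤ n-1)
    (h2 : p.1 + p.2 < 2*n+2) : wtVec n p p.1 ≤ -1 := by
  rw [mem_Sset] at hp
  have hn : 1 ≤ n := by omega
  show wVec n p.1 p.1 + wVec n p.2 p.1 ≤ -1
  rw [w_low n p.1 p.1 (by omega) (by omega) (by omega) h1,
    w_low n p.2 p.1 (by omega) (by omega) (by omega) h1,
    if_pos (le_refl p.1), if_neg (by omega : ¬ 2*n+3-p.1 ≤ p.1),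
    if_neg (by omega : ¬ 2*n+3-p.1 ≤ p.2)]
  split_ifs <;> norm_num

lemma wt_sum_mid {n : ℕ} {p : ℕ × ℕ} (hp : p ∈ Sset n) (h : p.2 ≤ n+2) :
    wtVec n p n + wtVec n p (n+1) ≤ -1 := by
  rw [mem_Sset] at hp
  have hn : 1 ≤ n := by omega
  show (wVec n p.1 n + wVec n p.2 n) + (wVec n p.1 (n+1) + wVec n p.2 (n+1)) ≤ -1
  rw [w_mid n p.1 hn (by omega) (by omega), w_mid n p.2 hn (by omega) (by omega),
    w_mid1 n p.1 hn (by omega) (by omega), w_mid1 n p.2 hn (by omega) (by omega),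
    if_pos (by omega : p.1 ≤ n ∨ p.1 = n+2), if_pos (by omega : p.1 ≤ n+1)]
  split_ifs <;> (try norm_num) <;> omega

lemma h_not_in_S {n i : ℕ} (hi1 : 1 ≤ i) (hi2 : i ≤ n-1) : (i, 2*n+2-i) ∉ Sset n := by
  rw [mem_Sset]
  omega

lemma g1_not_in_S {n : ℕ} : (n+1, n+1) ∉ Sset n := by
  rw [mem_Sset]; omega

lemma g2_not_in_S {n : ℕ} : (n+2, n+2) ∉ Sset n := by
  rw [mem_Sset]; omega

end Cusp

namespace Cusp

lemma base_val {n : ℕ} {U : Finset (ℕ × ℕ)} (hn : 1 ≤ n) (hUS : U ⊆ Sset n)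
    (j : ℕ) (hj1 : 1 ≤ j) (hj2 : j ≤ n+1) :
    deltaVec n j + (∑ p ∈ pairSet n \ U, wtVec n p j)
      = (if j ≤ n-1 then 2*(j:ℚ)-1 else (n:ℚ)) - (∑ p ∈ Sset n \ U, -(wtVec n p j)) := by
  have hsd1 := Finset.sum_sdiff (f := fun p => wtVec n p j) (hUS.trans Sset_sub_pairSet)
  have hsd2 := Finset.sum_sdiff (f := fun p => wtVec n p j) hUS
  have hP := sum_P_wt n j
  have hXA : (∑ p ∈ Sset n \ U, wtVec n p j) = - ∑ p ∈ Sset n \ U, -(wtVec n p j) := by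
    rw [Finset.sum_neg_distrib, neg_neg]
  have hkey : deltaVec n j + (∑ p ∈ Sset n, -(wtVec n p j))
      = (if j ≤ n-1 then 2*(j:ℚ)-1 else (n:ℚ)) := by
    rw [delta_eval n j hn hj1 hj2]
    rcases (by omega : (1 ≤ j ∧ j ≤ n - 1) ∨ j = n ∨ j = n + 1) with hj | hj | hj
    · rw [key_low n j hn hj.1 hj.2, if_pos hj.2, if_pos hj.2]
      ring
    · rw [hj, key_mid n hn, if_neg (by omega), if_neg (by omega)]
      ring
    · rw [hj, key_mid1 n hn, if_neg (by omega), if_neg (by omega)]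
      ring
  have hS : (∑ p ∈ Sset n, wtVec n p j) = - ∑ p ∈ Sset n, -(wtVec n p j) := by
    rw [Finset.sum_neg_distrib, neg_neg]
  linarith

def pointMass (x : ℕ × ℕ) (m : ℚ) : (ℕ × ℕ) → ℚ := fun p => if p = x then m else 0

lemma sum_pointMass {s : Finset (ℕ × ℕ)} {x : ℕ × ℕ} (hx : x ∈ s) (m : ℚ) :
    (∑ p ∈ s, pointMass x m p) = m := by
  rw [show (fun p => pointMass x m p) = fun p => if p = x then m else 0 from rfl]
  rw [Finset.sum_ite_eq' s x (fun _ => m), if_pos hx]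

lemma sum_pointMass_mul {s : Finset (ℕ × ℕ)} {x : ℕ × ℕ} (hx : x ∈ s) (m : ℚ)
    (g : ℕ × ℕ → ℚ) : (∑ p ∈ s, pointMass x m p * g p) = m * g x := by
  have step : ∀ p ∈ s, pointMass x m p * g p = (if p = x then m * g p else 0) := by
    intro p _
    rw [pointMass]
    split_ifs <;> ring
  rw [Finset.sum_congr rfl step, Finset.sum_ite_eq' s x (fun p => m * g p), if_pos hx]

def hMass (n : ℕ) (tf : ℕ → ℚ) : (ℕ × ℕ) → ℚ :=
  fun p => if 1 ≤ p.1 ∧ p.1 ≤ n-1 ∧ p.2 = 2*n+2-p.1 then tf p.1 else 0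

lemma hfil_eq (n : ℕ) (hn : 1 ≤ n) :
    (pairSet n).filter (fun p => 1 ≤ p.1 ∧ p.1 ≤ n-1 ∧ p.2 = 2*n+2-p.1)
      = (Finset.Icc 1 (n-1)).image (fun i => (i, 2*n+2-i)) := by
  ext p
  simp only [Finset.mem_filter, Finset.mem_image, Finset.mem_Icc, mem_pairSet]
  constructor
  · rintro ⟨hP, h1, h2, h3⟩
    exact ⟨p.1, ⟨h1, h2⟩, by rw [← h3]⟩
  · rintro ⟨i, ⟨hi1, hi2⟩, rfl⟩
    refine ⟨⟨hi1, by omega, by omega⟩, hi1, hi2, rfl⟩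

lemma sum_hMass (n : ℕ) (hn : 1 ≤ n) (tf : ℕ → ℚ) :
    (∑ p ∈ pairSet n, hMass n tf p) = ∑ i ∈ Finset.Icc 1 (n-1), tf i := by
  rw [show (fun p => hMass n tf p)
      = fun p => if 1 ≤ p.1 ∧ p.1 ≤ n-1 ∧ p.2 = 2*n+2-p.1 then tf p.1 else 0 from rfl]
  rw [← Finset.sum_filter, hfil_eq n hn, Finset.sum_image]
  intro a _ b _ hab
  exact congrArg Prod.fst hab

lemma sum_hMass_mul (n : ℕ) (hn : 1 ≤ n) (tf : ℕ → ℚ) (j : ℕ) (hj1 : 1 ≤ j) (hj2 : j ≤ n+1) :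
    (∑ p ∈ pairSet n, hMass n tf p * wtVec n p j)
      = -(if 1 ≤ j ∧ j ≤ n-1 then tf j else 0) := by
  have step : ∀ p ∈ pairSet n, hMass n tf p * wtVec n p j
      = (if 1 ≤ p.1 ∧ p.1 ≤ n-1 ∧ p.2 = 2*n+2-p.1 then tf p.1 * wtVec n p j else 0) := by
    intro p _
    rw [hMass]
    split_ifs <;> ring
  rw [Finset.sum_congr rfl step, ← Finset.sum_filter, hfil_eq n hn, Finset.sum_image
    (fun a _ b _ hab => congrArg Prod.fst hab)]
  have step2 : ∀ i ∈ Finset.Icc 1 (n-1),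
      tf i * wtVec n (i, 2*n+2-i) j = (if i = j then -(tf i) else 0) := by
    intro i hi
    rw [Finset.mem_Icc] at hi
    rw [wt_h n i j hi.1 hi.2 hj1 hj2]
    by_cases h : j = i
    · rw [if_pos h, if_pos h.symm]; ring
    · rw [if_neg h, if_neg (fun hc => h hc.symm)]; ring
  rw [Finset.sum_congr rfl step2, Finset.sum_ite_eq' (Finset.Icc 1 (n-1)) j (fun i => -(tf i))]
  by_cases h : 1 ≤ j ∧ j ≤ n-1
  · rw [if_pos (Finset.mem_Icc.mpr h), if_pos h]
  · rw [if_neg (fun hc => h (Finset.mem_Icc.mp hc)), if_neg h]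
    norm_num

lemma assemble {n : ℕ} {U : Finset (ℕ × ℕ)} (hn : 1 ≤ n)
    (hUS : U ⊆ Sset n) (hNe : U.Nonempty)
    (tf : ℕ → ℚ) (htf : ∀ i, 0 ≤ tf i)
    (xa xb : ℕ × ℕ) (hxa : xa ∈ Sset n \ U) (hxb : xb ∈ Sset n \ U)
    (ma mb mgp mgm : ℚ) (hma : 0 ≤ ma) (hmb : 0 ≤ mb) (hgp : 0 ≤ mgp) (hgm : 0 ≤ mgm)
    (hbudget : (∑ i ∈ Finset.Icc 1 (n-1), tf i) + (mgp + mgm + ma + mb) < (U.card : ℚ))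
    (hcoord : ∀ j, 1 ≤ j → j ≤ n+1 →
      (deltaVec n j + (∑ p ∈ pairSet n \ U, wtVec n p j))
        + ((-(if 1 ≤ j ∧ j ≤ n-1 then tf j else 0))
           + (mgp * wtVec n (n+1,n+1) j + mgm * wtVec n (n+2,n+2) j
              + ma * wtVec n xa j + mb * wtVec n xb j)) < 0) :
    ∃ c : ℕ × ℕ → ℚ,
      (∀ p, 0 ≤ c p) ∧ (∀ p ∈ U, c p = 0) ∧
      (U = ∅ → ∀ p ∈ pairSet n, c p = 0) ∧
      (U.Nonempty → (∑ p ∈ pairSet n, c p) < (U.card : ℚ)) ∧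
      ∀ j ∈ Finset.Icc 1 (n + 1),
        deltaVec n j + (∑ p ∈ pairSet n \ U, wtVec n p j)
          + (∑ p ∈ pairSet n, c p * wtVec n p j) < 0 := by
  have hxaS := Finset.mem_sdiff.mp hxa
  have hxbS := Finset.mem_sdiff.mp hxb
  have hxaP : xa ∈ pairSet n := Sset_sub_pairSet hxaS.1
  have hxbP : xb ∈ pairSet n := Sset_sub_pairSet hxbS.1
  have hg1P : ((n+1, n+1) : ℕ × ℕ) ∈ pairSet n := by rw [mem_pairSet]; omega
  have hg2P : ((n+2, n+2) : ℕ × ℕ) ∈ pairSet n := by rw [mem_pairSet]; omega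
  refine ⟨fun p => hMass n tf p + (pointMass (n+1,n+1) mgp p + pointMass (n+2,n+2) mgm p
    + pointMass xa ma p + pointMass xb mb p), ?_, ?_, ?_, ?_, ?_⟩
  · intro p
    show 0 ≤ hMass n tf p + (pointMass (n+1,n+1) mgp p + pointMass (n+2,n+2) mgm p
      + pointMass xa ma p + pointMass xb mb p)
    have h1 : 0 ≤ hMass n tf p := by rw [hMass]; split_ifs; exact htf p.1; rfl
    have h2 : 0 ≤ pointMass (n+1,n+1) mgp p := by rw [pointMass]; split_ifs; exact hgp; rfl
    have h3 : 0 ≤ pointMass (n+2,n+2) mgm p := by rw [pointMass]; split_ifs; exact hgm; rfl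
    have h4 : 0 ≤ pointMass xa ma p := by rw [pointMass]; split_ifs; exact hma; rfl
    have h5 : 0 ≤ pointMass xb mb p := by rw [pointMass]; split_ifs; exact hmb; rfl
    linarith
  · intro p hp
    show hMass n tf p + (pointMass (n+1,n+1) mgp p + pointMass (n+2,n+2) mgm p
      + pointMass xa ma p + pointMass xb mb p) = 0
    have hpS : p ∈ Sset n := hUS hp
    have h1 : hMass n tf p = 0 := by
      rw [hMass]
      split_ifs with h
      · exfalso
        have : p = (p.1, 2*n+2-p.1) := by
          ext
          · rfl
          · exact h.2.2
        rw [this] at hpS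
        exact h_not_in_S h.1 h.2.1 hpS
      · rfl
    have h2 : pointMass (n+1,n+1) mgp p = 0 := by
      rw [pointMass]
      split_ifs with h
      · exact absurd (h ▸ hpS) g1_not_in_S
      · rfl
    have h3 : pointMass (n+2,n+2) mgm p = 0 := by
      rw [pointMass]
      split_ifs with h
      · exact absurd (h ▸ hpS) g2_not_in_S
      · rfl
    have h4 : pointMass xa ma p = 0 := by
      rw [pointMass]
      split_ifs with h
      · exact absurd (h ▸ hp) hxaS.2
      · rfl
    have h5 : pointMass xb mb p = 0 := by
      rw [pointMass]
      split_ifs with h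
      · exact absurd (h ▸ hp) hxbS.2
      · rfl
    rw [h1, h2, h3, h4, h5]
    norm_num
  · intro h
    exact absurd (h ▸ hNe) (by simp)
  · intro _
    show (∑ p ∈ pairSet n, (hMass n tf p + (pointMass (n+1,n+1) mgp p
      + pointMass (n+2,n+2) mgm p + pointMass xa ma p + pointMass xb mb p))) < (U.card : ℚ)
    rw [Finset.sum_add_distrib, Finset.sum_add_distrib, Finset.sum_add_distrib,
      Finset.sum_add_distrib, sum_hMass n hn tf, sum_pointMass hg1P, sum_pointMass hg2P,
      sum_pointMass hxaP, sum_pointMass hxbP]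
    linarith
  · intro j hj
    rw [Finset.mem_Icc] at hj
    show deltaVec n j + (∑ p ∈ pairSet n \ U, wtVec n p j)
      + (∑ p ∈ pairSet n, (hMass n tf p + (pointMass (n+1,n+1) mgp p
        + pointMass (n+2,n+2) mgm p + pointMass xa ma p + pointMass xb mb p)) * wtVec n p j) < 0
    have expand : (∑ p ∈ pairSet n, (hMass n tf p + (pointMass (n+1,n+1) mgp p
        + pointMass (n+2,n+2) mgm p + pointMass xa ma p + pointMass xb mb p)) * wtVec n p j)
        = (∑ p ∈ pairSet n, hMass n tf p * wtVec n p j)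
          + ((∑ p ∈ pairSet n, pointMass (n+1,n+1) mgp p * wtVec n p j)
            + (∑ p ∈ pairSet n, pointMass (n+2,n+2) mgm p * wtVec n p j)
            + (∑ p ∈ pairSet n, pointMass xa ma p * wtVec n p j)
            + (∑ p ∈ pairSet n, pointMass xb mb p * wtVec n p j)) := by
      rw [← Finset.sum_add_distrib, ← Finset.sum_add_distrib, ← Finset.sum_add_distrib,
        ← Finset.sum_add_distrib]
      apply Finset.sum_congr rfl
      intro p _
      ring
    rw [expand, sum_hMass_mul n hn tf j hj.1 hj.2, sum_pointMass_mul hg1P,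
      sum_pointMass_mul hg2P, sum_pointMass_mul hxaP, sum_pointMass_mul hxbP]
    have := hcoord j hj.1 hj.2
    linarith

end Cusp

namespace Cusp

lemma count_le_sum {α : Type*} [DecidableEq α] {X T : Finset α} (hTX : T ⊆ X)
    (f : α → ℚ) (hT : ∀ p ∈ T, 1 ≤ f p) (hX : ∀ p ∈ X, 0 ≤ f p) :
    (T.card : ℚ) ≤ ∑ p ∈ X, f p := by
  have h1 : (T.card : ℚ) = ∑ _p ∈ T, (1:ℚ) := by
    rw [Finset.sum_const, nsmul_eq_mul, mul_one]
  rw [h1]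
  calc (∑ _p ∈ T, (1:ℚ)) ≤ ∑ p ∈ T, f p := Finset.sum_le_sum hT
    _ ≤ ∑ p ∈ X, f p := Finset.sum_le_sum_of_subset_of_nonneg hTX (fun p hp _ => hX p hp)

lemma single_le_sum' {α : Type*} {X : Finset α} {p : α} (hp : p ∈ X)
    (f : α → ℚ) (hX : ∀ q ∈ X, 0 ≤ f q) : f p ≤ ∑ q ∈ X, f q :=
  Finset.single_le_sum hX hp

lemma sum_u_le {n : ℕ} {U : Finset (ℕ × ℕ)} (hn : 1 ≤ n) (hUS : U ⊆ Sset n) :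
    (∑ s ∈ Finset.Icc 0 (n+1), ((Qset n s ∩ U).card : ℚ)) ≤ (U.card : ℚ) := by
  have hdisj : ∀ s ∈ Finset.Icc 0 (n+1), ∀ t ∈ Finset.Icc 0 (n+1), s ≠ t →
      Disjoint (Qset n s ∩ U) (Qset n t ∩ U) := by
    intro s hs t ht hst
    rw [Finset.mem_Icc] at hs ht
    exact Finset.disjoint_of_subset_left Finset.inter_subset_left
      (Finset.disjoint_of_subset_right Finset.inter_subset_left
        (Qset_disjoint hn hs.2 ht.2 hst))
  have h1 : ((Finset.Icc 0 (n+1)).biUnion (fun s => Qset n s ∩ U)).card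
      = ∑ s ∈ Finset.Icc 0 (n+1), (Qset n s ∩ U).card := Finset.card_biUnion hdisj
  have h2 : ((Finset.Icc 0 (n+1)).biUnion (fun s => Qset n s ∩ U)) ⊆ U := by
    intro p hp
    rw [Finset.mem_biUnion] at hp
    obtain ⟨s, _, hps⟩ := hp
    exact (Finset.mem_inter.mp hps).2
  have h3 := Finset.card_le_card h2
  rw [h1] at h3
  calc (∑ s ∈ Finset.Icc 0 (n+1), ((Qset n s ∩ U).card : ℚ))
      = ((∑ s ∈ Finset.Icc 0 (n+1), (Qset n s ∩ U).card : ℕ) : ℚ) := by push_cast; rfl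
    _ ≤ (U.card : ℚ) := by exact_mod_cast h3

lemma ux_split {n : ℕ} {U : Finset (ℕ × ℕ)} (hn : 1 ≤ n) (hUS : U ⊆ Sset n)
    {s : ℕ} (hs : s ≤ n+1) :
    (Qset n s ∩ U).card + (Qset n s ∩ (Sset n \ U)).card = (Qset n s).card := by
  have hdisj : Disjoint (Qset n s ∩ U) (Qset n s ∩ (Sset n \ U)) := by
    apply Finset.disjoint_left.mpr
    intro p hp hq
    rw [Finset.mem_inter] at hp hq
    rw [Finset.mem_sdiff] at hq
    exact hq.2.2 hp.2
  have hunion : (Qset n s ∩ U) ∪ (Qset n s ∩ (Sset n \ U)) = Qset n s := by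
    ext p
    rw [Finset.mem_union, Finset.mem_inter, Finset.mem_inter, Finset.mem_sdiff]
    constructor
    · rintro (h | h) <;> exact h.1
    · intro hp
      by_cases hU : p ∈ U
      · exact Or.inl ⟨hp, hU⟩
      · exact Or.inr ⟨hp, Qset_sub_Sset hn hs hp, hU⟩
  rw [← Finset.card_union_of_disjoint hdisj, hunion]

lemma Icc_zero_split (n : ℕ) (hn : 1 ≤ n) (f : ℕ → ℚ) :
    (∑ s ∈ Finset.Icc 0 (n+1), f s) = f 0 + f n + f (n+1) + ∑ s ∈ Finset.Icc 1 (n-1), f s := by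
  have hset : Finset.Icc 0 (n+1) = insert 0 (insert n (insert (n+1) (Finset.Icc 1 (n-1)))) := by
    ext t
    simp only [Finset.mem_Icc, Finset.mem_insert]
    omega
  rw [hset, Finset.sum_insert, Finset.sum_insert, Finset.sum_insert]
  · ring
  · rw [Finset.mem_Icc]; omega
  · simp only [Finset.mem_insert, Finset.mem_Icc]; omega
  · simp only [Finset.mem_insert, Finset.mem_Icc]; omega

/-- membership in `U` from membership in `S` minus `X`. -/
lemma mem_U_of {n : ℕ} {U : Finset (ℕ × ℕ)} {p : ℕ × ℕ}
    (hpS : p ∈ Sset n) (hpX : p ∉ Sset n \ U) : p ∈ U := by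
  by_contra h
  exact hpX (Finset.mem_sdiff.mpr ⟨hpS, h⟩)

end Cusp

open Cusp

set_option maxHeartbeats 1000000 in
/-- If `U ⊆ P` is saturated and contains none of `U₀`, `U₁`, or any `U_{I,J}`
with `#I + #J ≥ 2n+2`, then there is `c : P → ℚ_{≥0}` vanishing on `U`, identically zero if
`U = ∅` and with `Σ_{p∈P} c_p < #U` if `U ≠ ∅`, such that every coordinate of
`δ + Σ_{p∈P∖U} wt(p) + Σ_{p∈P} c_p·wt(p)` is strictly negative. -/
theorem cusp_cutting_condition
    (n : ℕ) (hn : 1 ≤ n) (U : Finset (ℕ × ℕ)) (hUP : U ⊆ pairSet n)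
    (hsat : Saturated n U)
    (hU0 : ¬ U0 n ⊆ U) (hU1 : ¬ U1 n ⊆ U)
    (hUIJ : ∀ I J : Finset ℕ, I ⊆ Finset.Icc 1 (2 * n + 2) → J ⊆ Finset.Icc 1 (2 * n + 2) →
      2 * n + 2 ≤ I.card + J.card → ¬ UIJ I J ⊆ U) :
    ∃ c : ℕ × ℕ → ℚ,
      (∀ p, 0 ≤ c p) ∧
      (∀ p ∈ U, c p = 0) ∧
      (U = ∅ → ∀ p ∈ pairSet n, c p = 0) ∧
      (U.Nonempty → (∑ p ∈ pairSet n, c p) < (U.card : ℚ)) ∧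
      ∀ j ∈ Finset.Icc 1 (n + 1),
        deltaVec n j + (∑ p ∈ pairSet n \ U, wtVec n p j)
          + (∑ p ∈ pairSet n, c p * wtVec n p j) < 0 := by
  rcases U.eq_empty_or_nonempty with hE | hNe
  · -- empty case : c = 0
    subst hE
    refine ⟨fun _ => 0, fun p => le_refl 0, fun p _ => rfl, fun _ p _ => rfl, ?_, ?_⟩
    · intro h
      exact absurd h (by simp)
    · intro j hj
      rw [Finset.mem_Icc] at hj
      have h1 : (∑ p ∈ pairSet n \ (∅ : Finset (ℕ × ℕ)), wtVec n p j) = 0 := by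
        rw [Finset.sdiff_empty]; exact sum_P_wt n j
      have h2 : (∑ p ∈ pairSet n, (0:ℚ) * wtVec n p j) = 0 := by
        apply Finset.sum_eq_zero; intro p _; ring
      rw [h1, h2, add_zero, add_zero, delta_eval n j hn hj.1 hj.2]
      split_ifs with h
      · have e1 : (1:ℚ) ≤ (j:ℚ) := by exact_mod_cast hj.1
        have e2 : (j:ℚ) + 1 ≤ (n:ℚ) := by exact_mod_cast (by omega : j + 1 ≤ n)
        have e3 : (j:ℚ) - 2*(n:ℚ) - 1 < 0 := by linarith
        exact mul_neg_of_pos_of_neg (by linarith) e3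
      · have e1 : (1:ℚ) ≤ (n:ℚ) := by exact_mod_cast hn
        nlinarith
  · -- nonempty case
    have hUS : U ⊆ Sset n := U_sub_Sset hn hUP hsat hUIJ
    have hcard1 : (1:ℚ) ≤ (U.card : ℚ) := by
      exact_mod_cast Nat.one_le_iff_ne_zero.mpr (Finset.card_ne_zero_of_mem hNe.choose_spec)
    -- nonnegativity of the deficiency sums
    have hA0 : ∀ j, 1 ≤ j → j ≤ n+1 → ∀ p ∈ Sset n \ U, 0 ≤ -(wtVec n p j) := by
      intro j h1 h2 p hp
      have := wt_nonpos (Finset.mem_sdiff.mp hp).1 j h1 h2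
      linarith
    have hAnn : ∀ j, 1 ≤ j → j ≤ n+1 → 0 ≤ (∑ p ∈ Sset n \ U, -(wtVec n p j)) := by
      intro j h1 h2
      exact Finset.sum_nonneg (hA0 j h1 h2)
    have hsingle : ∀ p ∈ Sset n \ U, ∀ j, 1 ≤ j → j ≤ n+1 →
        -(wtVec n p j) ≤ (∑ q ∈ Sset n \ U, -(wtVec n q j)) := by
      intro p hp j h1 h2
      exact Finset.single_le_sum (hA0 j h1 h2) hp
    -- epsilon
    set eps : ℚ := 1/(4*((n:ℚ)+2)) with hepsdef
    have heps : 0 < eps := by rw [hepsdef]; positivity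
    have hepsB : ((n:ℚ)+4) * eps ≤ 1/2 := by
      rw [hepsdef, mul_one_div, div_le_div_iff₀ (by positivity) (by norm_num)]
      have : (0:ℚ) ≤ (n:ℚ) := Nat.cast_nonneg n
      nlinarith
    -- counts : u s, x s
    have hux : ∀ s, s ≤ n+1 →
        ((Qset n s ∩ U).card : ℚ) + ((Qset n s ∩ (Sset n \ U)).card : ℚ)
          = ((Qset n s).card : ℚ) := by
      intro s hs
      have h := ux_split hn hUS (s := s) hs
      exact_mod_cast congrArg (fun m : ℕ => (m : ℚ)) h
    have husum : (∑ s ∈ Finset.Icc 0 (n+1), ((Qset n s ∩ U).card : ℚ)) ≤ (U.card : ℚ) :=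
      sum_u_le hn hUS
    -- per-slot deficiency bounds
    have hAx_low : ∀ s, 1 ≤ s → s ≤ n-1 →
        ((Qset n s ∩ (Sset n \ U)).card : ℚ) ≤ (∑ p ∈ Sset n \ U, -(wtVec n p s)) := by
      intro s h1 h2
      apply count_le_sum Finset.inter_subset_right _ ?_ (hA0 s h1 (by omega))
      intro p hp
      have := wt_low_slot h1 h2 (Finset.mem_inter.mp hp).1
      linarith
    -- the R* witness
    have hRs := hUIJ (Finset.Icc 1 n) (Finset.Icc 1 (n+2))
      (fun a ha => by rw [Finset.mem_Icc] at *; omega)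
      (fun a ha => by rw [Finset.mem_Icc] at *; omega)
      (by rw [Nat.card_Icc, Nat.card_Icc]; omega)
    obtain ⟨xt, hxtR, hxtU⟩ := Finset.not_subset.mp hRs
    rw [UIJ, Finset.mem_image] at hxtR
    obtain ⟨r, hr, hrx⟩ := hxtR
    rw [Finset.mem_product, Finset.mem_Icc, Finset.mem_Icc] at hr
    have hxt : 1 ≤ xt.1 ∧ xt.1 ≤ n ∧ xt.1 ≤ xt.2 ∧ xt.2 ≤ n+2 := by
      rw [← hrx]
      rcases le_total r.1 r.2 with h | h
      · rw [min_eq_left h, max_eq_right h]; exact ⟨by omega, by omega, h, by omega⟩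
      · rw [min_eq_right h, max_eq_left h]; exact ⟨by omega, by omega, h, by omega⟩
    have hxtS : xt ∈ Sset n := by rw [mem_Sset]; omega
    have hxtX : xt ∈ Sset n \ U := Finset.mem_sdiff.mpr ⟨hxtS, hxtU⟩
    have hxtP : xt ∈ pairSet n := Sset_sub_pairSet hxtS
    have hxtmid : wtVec n xt n + wtVec n xt (n+1) ≤ -1 := wt_sum_mid hxtS hxt.2.2.2
    by_cases hb : (∑ p ∈ Sset n \ U, -(wtVec n p n)) = 0
    · -- Case (b) : the coordinate-n deficiency sum vanishes
      have hxtn : wtVec n xt n = 0 := by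
        have h1 := hsingle xt hxtX n (by omega) (by omega)
        have h2 := wt_nonpos hxtS n (by omega) (by omega)
        rw [hb] at h1
        linarith
      have hxbn1 : wtVec n xt (n+1) ≤ -1 := by linarith
      have hXn : ∀ p ∈ Sset n \ U, ¬ (wtVec n p n ≤ -1) := by
        intro p hp hcon
        have h1 := hsingle p hp n (by omega) (by omega)
        rw [hb] at h1
        linarith
      obtain ⟨w, hwU1, hwU⟩ := Finset.not_subset.mp hU1
      have hwC : w ∈ pairSet n ∧ w.1 < n ∧ w.1 + w.2 < 2*n+2 := by
        rw [U1, Finset.mem_union, Finset.mem_filter] at hwU1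
        rcases hwU1 with h | h
        · exact ⟨h.1, h.2⟩
        · exfalso
          simp only [Finset.mem_insert, Finset.mem_singleton] at h
          rcases h with h | h
          · subst h
            have hwS : ((n,n) : ℕ × ℕ) ∈ Sset n := by rw [mem_Sset]; omega
            exact hXn _ (Finset.mem_sdiff.mpr ⟨hwS, hwU⟩) (wtn_neg hwS (Or.inl (le_refl n)))
          · subst h
            have hwS : ((n,n+2) : ℕ × ℕ) ∈ Sset n := by rw [mem_Sset]; omega
            exact hXn _ (Finset.mem_sdiff.mpr ⟨hwS, hwU⟩) (wtn_neg hwS (Or.inr rfl))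
      have hwP := mem_pairSet.mp hwC.1
      have hwS : w ∈ Sset n := by rw [mem_Sset]; omega
      have hwX : w ∈ Sset n \ U := Finset.mem_sdiff.mpr ⟨hwS, hwU⟩
      have hiw1 : 1 ≤ w.1 := hwP.1
      have hiw2 : w.1 ≤ n-1 := by omega
      have hwQ : w ∉ Qset n w.1 ∩ (Sset n \ U) := by
        intro hcon
        have h := (mem_Qset_low hiw1 hiw2).mp (Finset.mem_inter.mp hcon).1
        rcases h with h | h
        · exact hXn w hwX (wtn_neg hwS (Or.inl (by omega)))
        · omega
      have hAiw : ((Qset n w.1 ∩ (Sset n \ U)).card : ℚ) + 1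
          ≤ (∑ p ∈ Sset n \ U, -(wtVec n p w.1)) := by
        have hsub : insert w (Qset n w.1 ∩ (Sset n \ U)) ⊆ Sset n \ U :=
          Finset.insert_subset hwX Finset.inter_subset_right
        have hT : ∀ p ∈ insert w (Qset n w.1 ∩ (Sset n \ U)), 1 ≤ -(wtVec n p w.1) := by
          intro p hp
          rcases Finset.mem_insert.mp hp with h | h
          · subst h
            have := wt_own hwS hiw2 hwC.2.2
            linarith
          · have := wt_low_slot hiw1 hiw2 (Finset.mem_inter.mp h).1
            linarith
        have hc2 := count_le_sum hsub _ hT (hA0 w.1 hiw1 (by omega))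
        rw [Finset.card_insert_of_notMem hwQ] at hc2
        push_cast at hc2
        linarith
      have huiw : (1:ℚ) ≤ ((Qset n w.1 ∩ U).card : ℚ) := by
        have hdS : ((w.1, w.1) : ℕ × ℕ) ∈ Sset n := by rw [mem_Sset]; omega
        have hdU : ((w.1, w.1) : ℕ × ℕ) ∈ U := by
          apply mem_U_of hdS
          intro hcon
          exact hXn _ hcon (wtn_neg hdS (Or.inl (by omega)))
        have hdQ : ((w.1, w.1) : ℕ × ℕ) ∈ Qset n w.1 :=
          (mem_Qset_low hiw1 hiw2).mpr (Or.inl ⟨hiw1, le_refl _, rfl⟩)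
        have hpos : 0 < (Qset n w.1 ∩ U).card :=
          Finset.card_pos.mpr ⟨(w.1, w.1), Finset.mem_inter.mpr ⟨hdQ, hdU⟩⟩
        exact_mod_cast hpos
      have hxqn : ((Qset n n ∩ (Sset n \ U)).card : ℚ) = 0 := by
        have he : Qset n n ∩ (Sset n \ U) = ∅ := by
          rw [Finset.eq_empty_iff_forall_notMem]
          intro p hp
          have h1 := (mem_Qset_n hn).mp (Finset.mem_inter.mp hp).1
          have h2 := (Finset.mem_inter.mp hp).2
          exact hXn p h2 (wtn_neg (Finset.mem_sdiff.mp h2).1 (Or.inr h1.2.2))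
        rw [he]
        simp
      have hxq0 : ((Qset n 0 ∩ (Sset n \ U)).card : ℚ) = 0 := by
        have he : Qset n 0 ∩ (Sset n \ U) = ∅ := by
          rw [Finset.eq_empty_iff_forall_notMem]
          intro p hp
          have h1 := mem_Qset_zero.mp (Finset.mem_inter.mp hp).1
          have h2 := (Finset.mem_inter.mp hp).2
          exact hXn p h2 (wtn_neg (Finset.mem_sdiff.mp h2).1 (Or.inl (by omega)))
        rw [he]
        simp
      have hun : ((Qset n n ∩ U).card : ℚ) = (n:ℚ) := by
        have h := hux n (by omega)
        rw [hxqn, card_Qset_n hn] at h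
        linarith
      have hu0 : ((Qset n 0 ∩ U).card : ℚ) = (n:ℚ) := by
        have h := hux 0 (by omega)
        rw [hxq0, card_Qset_zero] at h
        linarith
      have hAn1x : ((Qset n (n+1) ∩ (Sset n \ U)).card : ℚ)
          ≤ (∑ p ∈ Sset n \ U, -(wtVec n p (n+1))) := by
        apply count_le_sum Finset.inter_subset_right _ ?_ (hA0 (n+1) (by omega) (by omega))
        intro p hp
        have h1 := (mem_Qset_n1 hn).mp (Finset.mem_inter.mp hp).1
        have h2 := (Finset.mem_inter.mp hp).2
        have := wtn1_neg (Finset.mem_sdiff.mp h2).1 (by omega)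
        linarith
      have hmaxn1 : max 0 ((n:ℚ) - (∑ p ∈ Sset n \ U, -(wtVec n p (n+1))))
          ≤ ((Qset n (n+1) ∩ U).card : ℚ) := by
        have h1 := hux (n+1) (by omega)
        rw [card_Qset_n1 hn] at h1
        apply max_le (Nat.cast_nonneg _)
        linarith
      have hslot : ∀ s ∈ Finset.Icc 1 (n-1),
          max 0 (2*(s:ℚ)-1 - (∑ p ∈ Sset n \ U, -(wtVec n p s)))
            ≤ ((Qset n s ∩ U).card : ℚ) - (if s = w.1 then 1 else 0) := by
        intro s hs
        rw [Finset.mem_Icc] at hs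
        have h1 := hux s (by omega)
        rw [card_Qset_low hs.1 hs.2] at h1
        have hcast : ((2*s-1 : ℕ):ℚ) = 2*(s:ℚ)-1 := by
          push_cast [Nat.cast_sub (by omega : 1 ≤ 2*s)]
          ring
        rw [hcast] at h1
        by_cases hsw : s = w.1
        · subst hsw
          rw [if_pos rfl]
          apply max_le (by linarith)
          linarith
        · rw [if_neg hsw, sub_zero]
          have h2 := hAx_low s hs.1 hs.2
          apply max_le (Nat.cast_nonneg _)
          have h3 : (0:ℚ) ≤ ((Qset n s ∩ (Sset n \ U)).card : ℚ) := Nat.cast_nonneg _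
          linarith
      -- assemble
      apply assemble hn hUS hNe
        (fun i => max 0 (2*(i:ℚ)-1 - (∑ p ∈ Sset n \ U, -(wtVec n p i))) + eps)
        (fun i => by
          show (0:ℚ) ≤ max 0 (2*(i:ℚ)-1 - (∑ p ∈ Sset n \ U, -(wtVec n p i))) + eps
          have := le_max_left (0:ℚ) (2*(i:ℚ)-1 - (∑ p ∈ Sset n \ U, -(wtVec n p i)))
          linarith)
        xt xt hxtX hxtX
        0 (((n:ℚ) + 2*eps) + (max 0 ((n:ℚ) - (∑ p ∈ Sset n \ U, -(wtVec n p (n+1)))) + eps))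
        0 ((n:ℚ) + 2*eps)
        (le_refl 0)
        (by
          have := le_max_left (0:ℚ) ((n:ℚ) - (∑ p ∈ Sset n \ U, -(wtVec n p (n+1))))
          have hn0 : (0:ℚ) ≤ (n:ℚ) := Nat.cast_nonneg n
          linarith)
        (le_refl 0)
        (by
          have hn0 : (0:ℚ) ≤ (n:ℚ) := Nat.cast_nonneg n
          linarith)
        ?_ ?_
      · -- budget
        beta_reduce
        rw [Finset.sum_add_distrib, Finset.sum_const, Nat.card_Icc, nsmul_eq_mul]
        have hcastn : ((n-1+1-1 : ℕ):ℚ) = (n:ℚ) - 1 := by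
          have e : (n-1+1-1 : ℕ) = n-1 := by omega
          rw [e]
          push_cast [Nat.cast_sub hn]
          ring
        rw [hcastn]
        have hmaxsum : (∑ i ∈ Finset.Icc 1 (n-1),
            max 0 (2*(i:ℚ)-1 - (∑ p ∈ Sset n \ U, -(wtVec n p i))))
            ≤ (∑ s ∈ Finset.Icc 1 (n-1), ((Qset n s ∩ U).card : ℚ)) - 1 := by
          calc (∑ i ∈ Finset.Icc 1 (n-1),
              max 0 (2*(i:ℚ)-1 - (∑ p ∈ Sset n \ U, -(wtVec n p i))))
              ≤ ∑ s ∈ Finset.Icc 1 (n-1),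
                (((Qset n s ∩ U).card : ℚ) - (if s = w.1 then 1 else 0)) :=
                Finset.sum_le_sum hslot
            _ = (∑ s ∈ Finset.Icc 1 (n-1), ((Qset n s ∩ U).card : ℚ)) - 1 := by
                rw [Finset.sum_sub_distrib,
                  Finset.sum_ite_eq' (Finset.Icc 1 (n-1)) w.1 (fun _ => (1:ℚ)),
                  if_pos (Finset.mem_Icc.mpr ⟨hiw1, hiw2⟩)]
        have husplit := Icc_zero_split n hn (fun s => ((Qset n s ∩ U).card : ℚ))
        linarith
      · -- coordinates
        intro j h1 h2
        beta_reduce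
        rw [base_val hn hUS j h1 h2]
        have hmbnn : (0:ℚ) ≤ ((n:ℚ) + 2*eps) + (max 0 ((n:ℚ)
            - (∑ p ∈ Sset n \ U, -(wtVec n p (n+1)))) + eps) := by
          have := le_max_left (0:ℚ) ((n:ℚ) - (∑ p ∈ Sset n \ U, -(wtVec n p (n+1))))
          have hn0 : (0:ℚ) ≤ (n:ℚ) := Nat.cast_nonneg n
          linarith
        rcases (by omega : (1 ≤ j ∧ j ≤ n - 1) ∨ j = n ∨ j = n + 1) with hj | hj | hj
        · have hg1 : wtVec n (n+1,n+1) j = 0 := by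
            rw [wt_g1 n j hn h1 h2, if_neg (by omega : ¬ j = n), if_neg (by omega : ¬ j = n+1)]
          have hg2 : wtVec n (n+2,n+2) j = 0 := by
            rw [wt_g2 n j hn h1 h2, if_neg (by omega : ¬ j = n), if_neg (by omega : ¬ j = n+1)]
          rw [hg1, hg2, if_pos hj.2, if_pos (show 1 ≤ j ∧ j ≤ n-1 from hj)]
          have e1 := le_max_right (0:ℚ) (2*(j:ℚ)-1 - (∑ p ∈ Sset n \ U, -(wtVec n p j)))
          have e2 : wtVec n xt j ≤ 0 := wt_nonpos hxtS j h1 h2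
          linarith [mul_nonpos_of_nonneg_of_nonpos hmbnn e2]
        · have hg1 : wtVec n (n+1,n+1) j = 1 := by
            rw [wt_g1 n j hn h1 h2, if_pos hj]
          have hg2 : wtVec n (n+2,n+2) j = -1 := by
            rw [wt_g2 n j hn h1 h2, if_pos hj]
          rw [hg1, hg2, hj, if_neg (by omega : ¬ n ≤ n-1),
            if_neg (by omega : ¬ (1 ≤ n ∧ n ≤ n-1)), hb, hxtn]
          linarith
        · have hg1 : wtVec n (n+1,n+1) j = -1 := by
            rw [wt_g1 n j hn h1 h2, if_neg (by omega : ¬ j = n), if_pos hj]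
          have hg2 : wtVec n (n+2,n+2) j = 1 := by
            rw [wt_g2 n j hn h1 h2, if_neg (by omega : ¬ j = n), if_pos hj]
          rw [hg1, hg2, hj, if_neg (by omega : ¬ n+1 ≤ n-1),
            if_neg (by omega : ¬ (1 ≤ n+1 ∧ n+1 ≤ n-1))]
          have e1 := le_max_right (0:ℚ) ((n:ℚ) - (∑ p ∈ Sset n \ U, -(wtVec n p (n+1))))
          have e2 : (((n:ℚ) + 2*eps) + (max 0 ((n:ℚ)
              - (∑ p ∈ Sset n \ U, -(wtVec n p (n+1)))) + eps)) * wtVec n xt (n+1)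
              ≤ (((n:ℚ) + 2*eps) + (max 0 ((n:ℚ)
              - (∑ p ∈ Sset n \ U, -(wtVec n p (n+1)))) + eps)) * (-1) :=
            mul_le_mul_of_nonneg_left hxbn1 hmbnn
          linarith

    by_cases hc : (∑ p ∈ Sset n \ U, -(wtVec n p (n+1))) = 0
    · -- Case (c) : the coordinate-(n+1) deficiency sum vanishes
      have hxtn1 : wtVec n xt (n+1) = 0 := by
        have h1 := hsingle xt hxtX (n+1) (by omega) (by omega)
        have h2 := wt_nonpos hxtS (n+1) (by omega) (by omega)
        rw [hc] at h1
        linarith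
      have hxan : wtVec n xt n ≤ -1 := by linarith
      have hXn1 : ∀ p ∈ Sset n \ U, ¬ (wtVec n p (n+1) ≤ -1) := by
        intro p hp hcon
        have h1 := hsingle p hp (n+1) (by omega) (by omega)
        rw [hc] at h1
        linarith
      obtain ⟨w, hwU0, hwU⟩ := Finset.not_subset.mp hU0
      have hwC : w ∈ pairSet n ∧ w.1 < n ∧ w.1 + w.2 < 2*n+2 := by
        rw [U0, Finset.mem_union, Finset.mem_filter] at hwU0
        rcases hwU0 with h | h
        · exact ⟨h.1, h.2⟩
        · exfalso
          simp only [Finset.mem_insert, Finset.mem_singleton] at h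
          rcases h with h | h
          · subst h
            have hwS : ((n,n) : ℕ × ℕ) ∈ Sset n := by rw [mem_Sset]; omega
            exact hXn1 _ (Finset.mem_sdiff.mpr ⟨hwS, hwU⟩) (wtn1_neg hwS (by omega))
          · subst h
            have hwS : ((n,n+1) : ℕ × ℕ) ∈ Sset n := by rw [mem_Sset]; omega
            exact hXn1 _ (Finset.mem_sdiff.mpr ⟨hwS, hwU⟩) (wtn1_neg hwS (by omega))
      have hwP := mem_pairSet.mp hwC.1
      have hwS : w ∈ Sset n := by rw [mem_Sset]; omega
      have hwX : w ∈ Sset n \ U := Finset.mem_sdiff.mpr ⟨hwS, hwU⟩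
      have hiw1 : 1 ≤ w.1 := hwP.1
      have hiw2 : w.1 ≤ n-1 := by omega
      have hwQ : w ∉ Qset n w.1 ∩ (Sset n \ U) := by
        intro hcon
        have h := (mem_Qset_low hiw1 hiw2).mp (Finset.mem_inter.mp hcon).1
        rcases h with h | h
        · exact hXn1 w hwX (wtn1_neg hwS (by omega))
        · omega
      have hAiw : ((Qset n w.1 ∩ (Sset n \ U)).card : ℚ) + 1
          ≤ (∑ p ∈ Sset n \ U, -(wtVec n p w.1)) := by
        have hsub : insert w (Qset n w.1 ∩ (Sset n \ U)) ⊆ Sset n \ U :=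
          Finset.insert_subset hwX Finset.inter_subset_right
        have hT : ∀ p ∈ insert w (Qset n w.1 ∩ (Sset n \ U)), 1 ≤ -(wtVec n p w.1) := by
          intro p hp
          rcases Finset.mem_insert.mp hp with h | h
          · subst h
            have := wt_own hwS hiw2 hwC.2.2
            linarith
          · have := wt_low_slot hiw1 hiw2 (Finset.mem_inter.mp h).1
            linarith
        have hc2 := count_le_sum hsub _ hT (hA0 w.1 hiw1 (by omega))
        rw [Finset.card_insert_of_notMem hwQ] at hc2
        push_cast at hc2
        linarith
      have huiw : (1:ℚ) ≤ ((Qset n w.1 ∩ U).card : ℚ) := by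
        have hdS : ((w.1, w.1) : ℕ × ℕ) ∈ Sset n := by rw [mem_Sset]; omega
        have hdU : ((w.1, w.1) : ℕ × ℕ) ∈ U := by
          apply mem_U_of hdS
          intro hcon
          exact hXn1 _ hcon (wtn1_neg hdS (by omega))
        have hdQ : ((w.1, w.1) : ℕ × ℕ) ∈ Qset n w.1 :=
          (mem_Qset_low hiw1 hiw2).mpr (Or.inl ⟨hiw1, le_refl _, rfl⟩)
        have hpos : 0 < (Qset n w.1 ∩ U).card :=
          Finset.card_pos.mpr ⟨(w.1, w.1), Finset.mem_inter.mpr ⟨hdQ, hdU⟩⟩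
        exact_mod_cast hpos
      have hxqn1 : ((Qset n (n+1) ∩ (Sset n \ U)).card : ℚ) = 0 := by
        have he : Qset n (n+1) ∩ (Sset n \ U) = ∅ := by
          rw [Finset.eq_empty_iff_forall_notMem]
          intro p hp
          have h1 := (mem_Qset_n1 hn).mp (Finset.mem_inter.mp hp).1
          have h2 := (Finset.mem_inter.mp hp).2
          exact hXn1 p h2 (wtn1_neg (Finset.mem_sdiff.mp h2).1 (by omega))
        rw [he]
        simp
      have hxq0 : ((Qset n 0 ∩ (Sset n \ U)).card : ℚ) = 0 := by
        have he : Qset n 0 ∩ (Sset n \ U) = ∅ := by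
          rw [Finset.eq_empty_iff_forall_notMem]
          intro p hp
          have h1 := mem_Qset_zero.mp (Finset.mem_inter.mp hp).1
          have h2 := (Finset.mem_inter.mp hp).2
          exact hXn1 p h2 (wtn1_neg (Finset.mem_sdiff.mp h2).1 (by omega))
        rw [he]
        simp
      have hun1 : ((Qset n (n+1) ∩ U).card : ℚ) = (n:ℚ) := by
        have h := hux (n+1) (by omega)
        rw [hxqn1, card_Qset_n1 hn] at h
        linarith
      have hu0 : ((Qset n 0 ∩ U).card : ℚ) = (n:ℚ) := by
        have h := hux 0 (by omega)
        rw [hxq0, card_Qset_zero] at h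
        linarith
      have hAnx : ((Qset n n ∩ (Sset n \ U)).card : ℚ)
          ≤ (∑ p ∈ Sset n \ U, -(wtVec n p n)) := by
        apply count_le_sum Finset.inter_subset_right _ ?_ (hA0 n (by omega) (by omega))
        intro p hp
        have h1 := (mem_Qset_n hn).mp (Finset.mem_inter.mp hp).1
        have h2 := (Finset.mem_inter.mp hp).2
        have := wtn_neg (Finset.mem_sdiff.mp h2).1 (Or.inr h1.2.2)
        linarith
      have hmaxn : max 0 ((n:ℚ) - (∑ p ∈ Sset n \ U, -(wtVec n p n)))
          ≤ ((Qset n n ∩ U).card : ℚ) := by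
        have h1 := hux n (by omega)
        rw [card_Qset_n hn] at h1
        apply max_le (Nat.cast_nonneg _)
        linarith
      have hslot : ∀ s ∈ Finset.Icc 1 (n-1),
          max 0 (2*(s:ℚ)-1 - (∑ p ∈ Sset n \ U, -(wtVec n p s)))
            ≤ ((Qset n s ∩ U).card : ℚ) - (if s = w.1 then 1 else 0) := by
        intro s hs
        rw [Finset.mem_Icc] at hs
        have h1 := hux s (by omega)
        rw [card_Qset_low hs.1 hs.2] at h1
        have hcast : ((2*s-1 : ℕ):ℚ) = 2*(s:ℚ)-1 := by
          push_cast [Nat.cast_sub (by omega : 1 ≤ 2*s)]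
          ring
        rw [hcast] at h1
        by_cases hsw : s = w.1
        · subst hsw
          rw [if_pos rfl]
          apply max_le (by linarith)
          linarith
        · rw [if_neg hsw, sub_zero]
          have h2 := hAx_low s hs.1 hs.2
          apply max_le (Nat.cast_nonneg _)
          have h3 : (0:ℚ) ≤ ((Qset n s ∩ (Sset n \ U)).card : ℚ) := Nat.cast_nonneg _
          linarith
      apply assemble hn hUS hNe
        (fun i => max 0 (2*(i:ℚ)-1 - (∑ p ∈ Sset n \ U, -(wtVec n p i))) + eps)
        (fun i => by
          show (0:ℚ) ≤ max 0 (2*(i:ℚ)-1 - (∑ p ∈ Sset n \ U, -(wtVec n p i))) + eps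
          have := le_max_left (0:ℚ) (2*(i:ℚ)-1 - (∑ p ∈ Sset n \ U, -(wtVec n p i)))
          linarith)
        xt xt hxtX hxtX
        (((n:ℚ) + 2*eps) + (max 0 ((n:ℚ) - (∑ p ∈ Sset n \ U, -(wtVec n p n))) + eps)) 0
        ((n:ℚ) + 2*eps) 0
        (by
          have := le_max_left (0:ℚ) ((n:ℚ) - (∑ p ∈ Sset n \ U, -(wtVec n p n)))
          have hn0 : (0:ℚ) ≤ (n:ℚ) := Nat.cast_nonneg n
          linarith)
        (le_refl 0)
        (by
          have hn0 : (0:ℚ) ≤ (n:ℚ) := Nat.cast_nonneg n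
          linarith)
        (le_refl 0)
        ?_ ?_
      · -- budget
        beta_reduce
        rw [Finset.sum_add_distrib, Finset.sum_const, Nat.card_Icc, nsmul_eq_mul]
        have hcastn : ((n-1+1-1 : ℕ):ℚ) = (n:ℚ) - 1 := by
          have e : (n-1+1-1 : ℕ) = n-1 := by omega
          rw [e]
          push_cast [Nat.cast_sub hn]
          ring
        rw [hcastn]
        have hmaxsum : (∑ i ∈ Finset.Icc 1 (n-1),
            max 0 (2*(i:ℚ)-1 - (∑ p ∈ Sset n \ U, -(wtVec n p i))))
            ≤ (∑ s ∈ Finset.Icc 1 (n-1), ((Qset n s ∩ U).card : ℚ)) - 1 := by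
          calc (∑ i ∈ Finset.Icc 1 (n-1),
              max 0 (2*(i:ℚ)-1 - (∑ p ∈ Sset n \ U, -(wtVec n p i))))
              ≤ ∑ s ∈ Finset.Icc 1 (n-1),
                (((Qset n s ∩ U).card : ℚ) - (if s = w.1 then 1 else 0)) :=
                Finset.sum_le_sum hslot
            _ = (∑ s ∈ Finset.Icc 1 (n-1), ((Qset n s ∩ U).card : ℚ)) - 1 := by
                rw [Finset.sum_sub_distrib,
                  Finset.sum_ite_eq' (Finset.Icc 1 (n-1)) w.1 (fun _ => (1:ℚ)),
                  if_pos (Finset.mem_Icc.mpr ⟨hiw1, hiw2⟩)]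
        have husplit := Icc_zero_split n hn (fun s => ((Qset n s ∩ U).card : ℚ))
        linarith
      · -- coordinates
        intro j h1 h2
        beta_reduce
        rw [base_val hn hUS j h1 h2]
        have hmann : (0:ℚ) ≤ ((n:ℚ) + 2*eps) + (max 0 ((n:ℚ)
            - (∑ p ∈ Sset n \ U, -(wtVec n p n))) + eps) := by
          have := le_max_left (0:ℚ) ((n:ℚ) - (∑ p ∈ Sset n \ U, -(wtVec n p n)))
          have hn0 : (0:ℚ) ≤ (n:ℚ) := Nat.cast_nonneg n
          linarith
        rcases (by omega : (1 ≤ j ∧ j ≤ n - 1) ∨ j = n ∨ j = n + 1) with hj | hj | hj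
        · have hg1 : wtVec n (n+1,n+1) j = 0 := by
            rw [wt_g1 n j hn h1 h2, if_neg (by omega : ¬ j = n), if_neg (by omega : ¬ j = n+1)]
          have hg2 : wtVec n (n+2,n+2) j = 0 := by
            rw [wt_g2 n j hn h1 h2, if_neg (by omega : ¬ j = n), if_neg (by omega : ¬ j = n+1)]
          rw [hg1, hg2, if_pos hj.2, if_pos (show 1 ≤ j ∧ j ≤ n-1 from hj)]
          have e1 := le_max_right (0:ℚ) (2*(j:ℚ)-1 - (∑ p ∈ Sset n \ U, -(wtVec n p j)))
          have e2 : wtVec n xt j ≤ 0 := wt_nonpos hxtS j h1 h2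
          linarith [mul_nonpos_of_nonneg_of_nonpos hmann e2]
        · have hg1 : wtVec n (n+1,n+1) j = 1 := by
            rw [wt_g1 n j hn h1 h2, if_pos hj]
          have hg2 : wtVec n (n+2,n+2) j = -1 := by
            rw [wt_g2 n j hn h1 h2, if_pos hj]
          rw [hg1, hg2, hj, if_neg (by omega : ¬ n ≤ n-1),
            if_neg (by omega : ¬ (1 ≤ n ∧ n ≤ n-1))]
          have e1 := le_max_right (0:ℚ) ((n:ℚ) - (∑ p ∈ Sset n \ U, -(wtVec n p n)))
          have e2 : (((n:ℚ) + 2*eps) + (max 0 ((n:ℚ)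
              - (∑ p ∈ Sset n \ U, -(wtVec n p n))) + eps)) * wtVec n xt n
              ≤ (((n:ℚ) + 2*eps) + (max 0 ((n:ℚ)
              - (∑ p ∈ Sset n \ U, -(wtVec n p n))) + eps)) * (-1) :=
            mul_le_mul_of_nonneg_left hxan hmann
          linarith
        · have hg1 : wtVec n (n+1,n+1) j = -1 := by
            rw [wt_g1 n j hn h1 h2, if_neg (by omega : ¬ j = n), if_pos hj]
          have hg2 : wtVec n (n+2,n+2) j = 1 := by
            rw [wt_g2 n j hn h1 h2, if_neg (by omega : ¬ j = n), if_pos hj]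
          rw [hg1, hg2, hj, if_neg (by omega : ¬ n+1 ≤ n-1),
            if_neg (by omega : ¬ (1 ≤ n+1 ∧ n+1 ≤ n-1)), hc, hxtn1]
          linarith

    · -- Case (a) : both mid deficiency sums positive
      have hex_a : ∃ p ∈ Sset n \ U, wtVec n p n ≤ -1 := by
        by_contra hcon
        push_neg at hcon
        apply hb
        apply Finset.sum_eq_zero
        intro p hp
        have hpS := (Finset.mem_sdiff.mp hp).1
        have hc1 := (wt_mid_cases n p hn (Sset_sub_pairSet hpS)).1
        have hc2 := wt_nonpos hpS n (by omega) (by omega)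
        have hc3 := hcon p hp
        rcases hc1 with h | h | h
        · exfalso; rw [h] at hc3; norm_num at hc3
        · rw [h]; ring
        · exfalso; rw [h] at hc2; norm_num at hc2
      obtain ⟨xa, hxaX, hxan⟩ := hex_a
      have hex_b : ∃ p ∈ Sset n \ U, wtVec n p (n+1) ≤ -1 := by
        by_contra hcon
        push_neg at hcon
        apply hc
        apply Finset.sum_eq_zero
        intro p hp
        have hpS := (Finset.mem_sdiff.mp hp).1
        have hc1 := (wt_mid_cases n p hn (Sset_sub_pairSet hpS)).2
        have hc2 := wt_nonpos hpS (n+1) (by omega) (by omega)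
        have hc3 := hcon p hp
        rcases hc1 with h | h | h
        · exfalso; rw [h] at hc3; norm_num at hc3
        · rw [h]; ring
        · exfalso; rw [h] at hc2; norm_num at hc2
      obtain ⟨xb, hxbX, hxbn1⟩ := hex_b
      have hxaS := (Finset.mem_sdiff.mp hxaX).1
      have hxbS := (Finset.mem_sdiff.mp hxbX).1
      have hmannA : (0:ℚ) ≤ max 0 ((n:ℚ) - (∑ p ∈ Sset n \ U, -(wtVec n p n))) + eps := by
        have := le_max_left (0:ℚ) ((n:ℚ) - (∑ p ∈ Sset n \ U, -(wtVec n p n)))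
        linarith
      have hmannB : (0:ℚ) ≤ max 0 ((n:ℚ) - (∑ p ∈ Sset n \ U, -(wtVec n p (n+1)))) + eps := by
        have := le_max_left (0:ℚ) ((n:ℚ) - (∑ p ∈ Sset n \ U, -(wtVec n p (n+1))))
        linarith
      apply assemble hn hUS hNe
        (fun i => max 0 (2*(i:ℚ)-1 - (∑ p ∈ Sset n \ U, -(wtVec n p i))) + eps)
        (fun i => by
          show (0:ℚ) ≤ max 0 (2*(i:ℚ)-1 - (∑ p ∈ Sset n \ U, -(wtVec n p i))) + eps
          have := le_max_left (0:ℚ) (2*(i:ℚ)-1 - (∑ p ∈ Sset n \ U, -(wtVec n p i)))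
          linarith)
        xa xb hxaX hxbX
        (max 0 ((n:ℚ) - (∑ p ∈ Sset n \ U, -(wtVec n p n))) + eps)
        (max 0 ((n:ℚ) - (∑ p ∈ Sset n \ U, -(wtVec n p (n+1)))) + eps)
        0 0 hmannA hmannB (le_refl 0) (le_refl 0)
        ?_ ?_
      · -- budget
        beta_reduce
        rw [Finset.sum_add_distrib, Finset.sum_const, Nat.card_Icc, nsmul_eq_mul]
        have hcastn : ((n-1+1-1 : ℕ):ℚ) = (n:ℚ) - 1 := by
          have e : (n-1+1-1 : ℕ) = n-1 := by omega
          rw [e]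
          push_cast [Nat.cast_sub hn]
          ring
        rw [hcastn]
        by_cases hu0 : (1:ℚ) ≤ ((Qset n 0 ∩ U).card : ℚ)
        · -- enough mass in U outside the slot sets
          have hslotA : ∀ s ∈ Finset.Icc 1 (n-1),
              max 0 (2*(s:ℚ)-1 - (∑ p ∈ Sset n \ U, -(wtVec n p s)))
                ≤ ((Qset n s ∩ U).card : ℚ) := by
            intro s hs
            rw [Finset.mem_Icc] at hs
            have h1 := hux s (by omega)
            rw [card_Qset_low hs.1 hs.2] at h1
            have hcast : ((2*s-1 : ℕ):ℚ) = 2*(s:ℚ)-1 := by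
              push_cast [Nat.cast_sub (by omega : 1 ≤ 2*s)]
              ring
            rw [hcast] at h1
            have h2 := hAx_low s hs.1 hs.2
            apply max_le (Nat.cast_nonneg _)
            have h3 : (0:ℚ) ≤ ((Qset n s ∩ (Sset n \ U)).card : ℚ) := Nat.cast_nonneg _
            linarith
          have hmaxsum : (∑ i ∈ Finset.Icc 1 (n-1),
              max 0 (2*(i:ℚ)-1 - (∑ p ∈ Sset n \ U, -(wtVec n p i))))
              ≤ (∑ s ∈ Finset.Icc 1 (n-1), ((Qset n s ∩ U).card : ℚ)) :=
            Finset.sum_le_sum hslotA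
          have hAnx : ((Qset n n ∩ (Sset n \ U)).card : ℚ)
              ≤ (∑ p ∈ Sset n \ U, -(wtVec n p n)) := by
            apply count_le_sum Finset.inter_subset_right _ ?_ (hA0 n (by omega) (by omega))
            intro p hp
            have h1 := (mem_Qset_n hn).mp (Finset.mem_inter.mp hp).1
            have h2 := (Finset.mem_inter.mp hp).2
            have := wtn_neg (Finset.mem_sdiff.mp h2).1 (Or.inr h1.2.2)
            linarith
          have hmaxn : max 0 ((n:ℚ) - (∑ p ∈ Sset n \ U, -(wtVec n p n)))
              ≤ ((Qset n n ∩ U).card : ℚ) := by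
            have h1 := hux n (by omega)
            rw [card_Qset_n hn] at h1
            apply max_le (Nat.cast_nonneg _)
            linarith
          have hAn1x : ((Qset n (n+1) ∩ (Sset n \ U)).card : ℚ)
              ≤ (∑ p ∈ Sset n \ U, -(wtVec n p (n+1))) := by
            apply count_le_sum Finset.inter_subset_right _ ?_ (hA0 (n+1) (by omega) (by omega))
            intro p hp
            have h1 := (mem_Qset_n1 hn).mp (Finset.mem_inter.mp hp).1
            have h2 := (Finset.mem_inter.mp hp).2
            have := wtn1_neg (Finset.mem_sdiff.mp h2).1 (by omega)
            linarith
          have hmaxn1 : max 0 ((n:ℚ) - (∑ p ∈ Sset n \ U, -(wtVec n p (n+1))))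
              ≤ ((Qset n (n+1) ∩ U).card : ℚ) := by
            have h1 := hux (n+1) (by omega)
            rw [card_Qset_n1 hn] at h1
            apply max_le (Nat.cast_nonneg _)
            linarith
          have husplit := Icc_zero_split n hn (fun s => ((Qset n s ∩ U).card : ℚ))
          linarith
        · -- the whole middle column lies outside U : all deficits vanish
          push_neg at hu0
          have hQ0U : Qset n 0 ∩ U = ∅ := by
            rw [← Finset.card_eq_zero]
            have : (Qset n 0 ∩ U).card < 1 := by exact_mod_cast hu0
            omega
          have hColX : ∀ i, 1 ≤ i → i ≤ n → ∀ b, n ≤ b → b ≤ n+2 →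
              ((i,b) : ℕ × ℕ) ∈ Sset n \ U := by
            intro i hi1 hi2 b hb1 hb2
            have hinS : ((i,b) : ℕ × ℕ) ∈ Sset n := by rw [mem_Sset]; omega
            have hnS : ((i,n) : ℕ × ℕ) ∈ Sset n := by rw [mem_Sset]; omega
            have hinX : ((i,n) : ℕ × ℕ) ∉ U := by
              intro hcon
              have hmem : ((i,n) : ℕ × ℕ) ∈ Qset n 0 ∩ U :=
                Finset.mem_inter.mpr ⟨mem_Qset_zero.mpr ⟨hi1, hi2, rfl⟩, hcon⟩
              rw [hQ0U] at hmem
              exact absurd hmem (Finset.notMem_empty _)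
            refine Finset.mem_sdiff.mpr ⟨hinS, ?_⟩
            intro hcon
            apply hinX
            apply mem_of_wt_le hsat hcon (Sset_sub_pairSet hnS)
            intro j hj
            rw [Finset.mem_Icc] at hj
            show wVec n i j + wVec n n j ≤ wVec n i j + wVec n b j
            have := w_mono (n := n) (a := n) (k := b) (by omega) hb1 (by omega) hn
              (fun _ => by omega) j hj.1 hj.2
            linarith
          have hAnBig : (n:ℚ) ≤ (∑ p ∈ Sset n \ U, -(wtVec n p n)) := by
            have hsub : Qset n 0 ⊆ Sset n \ U := by
              intro p hp
              have h1 := mem_Qset_zero.mp hp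
              have := hColX p.1 h1.1 h1.2.1 p.2 (by omega) (by omega)
              rwa [Prod.mk.eta] at this
            have hT : ∀ p ∈ Qset n 0, 1 ≤ -(wtVec n p n) := by
              intro p hp
              have h1 := mem_Qset_zero.mp hp
              have := wtn_neg (Finset.mem_sdiff.mp (hsub hp)).1 (Or.inl (by omega))
              linarith
            have := count_le_sum hsub _ hT (hA0 n (by omega) (by omega))
            rwa [card_Qset_zero] at this
          have hAn1Big : (n:ℚ) ≤ (∑ p ∈ Sset n \ U, -(wtVec n p (n+1))) := by
            have hsub : Qset n 0 ⊆ Sset n \ U := by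
              intro p hp
              have h1 := mem_Qset_zero.mp hp
              have := hColX p.1 h1.1 h1.2.1 p.2 (by omega) (by omega)
              rwa [Prod.mk.eta] at this
            have hT : ∀ p ∈ Qset n 0, 1 ≤ -(wtVec n p (n+1)) := by
              intro p hp
              have h1 := mem_Qset_zero.mp hp
              have := wtn1_neg (Finset.mem_sdiff.mp (hsub hp)).1 (by omega)
              linarith
            have := count_le_sum hsub _ hT (hA0 (n+1) (by omega) (by omega))
            rwa [card_Qset_zero] at this
          have hAjBig : ∀ j, 1 ≤ j → j ≤ n-1 →
              2*(j:ℚ)-1 ≤ (∑ p ∈ Sset n \ U, -(wtVec n p j)) := by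
            intro j hj1 hj2
            have hsub : (Finset.Icc 1 j) ×ˢ ({n, n+1, n+2} : Finset ℕ) ⊆ Sset n \ U := by
              intro p hp
              rw [Finset.mem_product, Finset.mem_Icc] at hp
              have hb' : n ≤ p.2 ∧ p.2 ≤ n+2 := by
                have h := hp.2
                simp only [Finset.mem_insert, Finset.mem_singleton] at h
                omega
              have := hColX p.1 hp.1.1 (by omega) p.2 hb'.1 hb'.2
              rwa [Prod.mk.eta] at this
            have hT : ∀ p ∈ (Finset.Icc 1 j) ×ˢ ({n, n+1, n+2} : Finset ℕ),
                1 ≤ -(wtVec n p j) := by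
              intro p hp
              rw [Finset.mem_product, Finset.mem_Icc] at hp
              have hb' : n ≤ p.2 ∧ p.2 ≤ n+2 := by
                have h := hp.2
                simp only [Finset.mem_insert, Finset.mem_singleton] at h
                omega
              have hval : wtVec n p j = -1 := by
                show wVec n p.1 j + wVec n p.2 j = -1
                rw [w_low n p.1 j (by omega) (by omega) hj1 hj2,
                  w_low n p.2 j (by omega) (by omega) hj1 hj2,
                  if_pos hp.1.2, if_neg (by omega : ¬ 2*n+3-j ≤ p.1),
                  if_neg (by omega : ¬ p.2 ≤ j), if_neg (by omega : ¬ 2*n+3-j ≤ p.2)]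
                norm_num
              linarith
            have hcount := count_le_sum hsub _ hT (hA0 j hj1 (by omega))
            have hcard : ((((Finset.Icc 1 j) ×ˢ ({n, n+1, n+2} : Finset ℕ)).card : ℕ) : ℚ)
                = 3*(j:ℚ) := by
              rw [Finset.card_product, Nat.card_Icc]
              have h3 : ({n, n+1, n+2} : Finset ℕ).card = 3 := by
                rw [Finset.card_insert_of_notMem (by simp),
                  Finset.card_insert_of_notMem (by simp), Finset.card_singleton]
              rw [h3]
              have e : (j+1-1 : ℕ) = j := by omega
              rw [e]
              push_cast
              ring
            rw [hcard] at hcount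
            have : (0:ℚ) ≤ (j:ℚ) := Nat.cast_nonneg j
            linarith
          have hzero : (∑ i ∈ Finset.Icc 1 (n-1),
              max 0 (2*(i:ℚ)-1 - (∑ p ∈ Sset n \ U, -(wtVec n p i)))) = 0 := by
            apply Finset.sum_eq_zero
            intro i hi
            rw [Finset.mem_Icc] at hi
            have := hAjBig i hi.1 hi.2
            exact max_eq_left (by linarith)
          have hz1 : max 0 ((n:ℚ) - (∑ p ∈ Sset n \ U, -(wtVec n p n))) = 0 :=
            max_eq_left (by linarith)
          have hz2 : max 0 ((n:ℚ) - (∑ p ∈ Sset n \ U, -(wtVec n p (n+1)))) = 0 :=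
            max_eq_left (by linarith)
          rw [hzero, hz1, hz2]
          have hncast : (1:ℚ) ≤ (n:ℚ) := by exact_mod_cast hn
          linarith
      · -- coordinates
        intro j h1 h2
        beta_reduce
        rw [base_val hn hUS j h1 h2]
        rcases (by omega : (1 ≤ j ∧ j ≤ n - 1) ∨ j = n ∨ j = n + 1) with hj | hj | hj
        · have hg1 : wtVec n (n+1,n+1) j = 0 := by
            rw [wt_g1 n j hn h1 h2, if_neg (by omega : ¬ j = n), if_neg (by omega : ¬ j = n+1)]
          have hg2 : wtVec n (n+2,n+2) j = 0 := by
            rw [wt_g2 n j hn h1 h2, if_neg (by omega : ¬ j = n), if_neg (by omega : ¬ j = n+1)]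
          rw [hg1, hg2, if_pos hj.2, if_pos (show 1 ≤ j ∧ j ≤ n-1 from hj)]
          have e1 := le_max_right (0:ℚ) (2*(j:ℚ)-1 - (∑ p ∈ Sset n \ U, -(wtVec n p j)))
          have e2 : wtVec n xa j ≤ 0 := wt_nonpos hxaS j h1 h2
          have e3 : wtVec n xb j ≤ 0 := wt_nonpos hxbS j h1 h2
          linarith [mul_nonpos_of_nonneg_of_nonpos hmannA e2,
            mul_nonpos_of_nonneg_of_nonpos hmannB e3]
        · rw [hj, if_neg (by omega : ¬ n ≤ n-1), if_neg (by omega : ¬ (1 ≤ n ∧ n ≤ n-1))]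
          have e1 := le_max_right (0:ℚ) ((n:ℚ) - (∑ p ∈ Sset n \ U, -(wtVec n p n)))
          have e2 : (max 0 ((n:ℚ) - (∑ p ∈ Sset n \ U, -(wtVec n p n))) + eps) * wtVec n xa n
              ≤ (max 0 ((n:ℚ) - (∑ p ∈ Sset n \ U, -(wtVec n p n))) + eps) * (-1) :=
            mul_le_mul_of_nonneg_left hxan hmannA
          have e3 : wtVec n xb n ≤ 0 := wt_nonpos hxbS n (by omega) (by omega)
          linarith [mul_nonpos_of_nonneg_of_nonpos hmannB e3]
        · rw [hj, if_neg (by omega : ¬ n+1 ≤ n-1), if_neg (by omega : ¬ (1 ≤ n+1 ∧ n+1 ≤ n-1))]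
          have e1 := le_max_right (0:ℚ) ((n:ℚ) - (∑ p ∈ Sset n \ U, -(wtVec n p (n+1))))
          have e2 : (max 0 ((n:ℚ) - (∑ p ∈ Sset n \ U, -(wtVec n p (n+1)))) + eps)
                * wtVec n xb (n+1)
              ≤ (max 0 ((n:ℚ) - (∑ p ∈ Sset n \ U, -(wtVec n p (n+1)))) + eps) * (-1) :=
            mul_le_mul_of_nonneg_left hxbn1 hmannB
          have e3 : wtVec n xa (n+1) ≤ 0 := wt_nonpos hxaS (n+1) (by omega) (by omega)
          linarith [mul_nonpos_of_nonneg_of_nonpos hmannA e3]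
end
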